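/- arXiv:1909.06668 — 8 statements merged into one kernel-verified Lean document; each statement's English description precedes it below -/
import Mathlib

section
/- Let G and H be finite groups, A an abelian group, and let U ≤ G × H be a subgroup with first projection p₁(U) = G. Let φ : U → A be a group homomorphism, and let k₁(U) = {g ∈ G | (g,1) ∈ U}. If there exists a homomorphism α : G → A such that α(g) = φ(g,1) for all g ∈ k₁(U), then there exists a homomorphism ψ : G × H → A whose restriction to U equals φ. -/
theorem stmt_0 {G H A : Type*} [Group G] [Group H] [CommGroup A]
    [Finite G] [Finite H]
    (U : Subgroup (G × H))
    (hp1 : U.map (MonoidHom.fst G H) = ⊤)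
    (hp2 : U.map (MonoidHom.snd G H) = ⊤)
    (φ : ↥U →* A)
    (α : G →* A)
    (hα : ∀ (g : G) (hg : ((g, (1 : H)) : G × H) ∈ U), α g = φ ⟨(g, 1), hg⟩) :
    ∃ ψ : (G × H) →* A, ∀ u : ↥U, ψ ↑u = φ u := by
  classical
  have hex : ∀ h : H, ∃ g : G, ((g, h) : G × H) ∈ U := by
    intro h
    have : h ∈ U.map (MonoidHom.snd G H) := hp2 ▸ Subgroup.mem_top h
    obtain ⟨⟨g, h'⟩, hm, he⟩ := this
    exact ⟨g, by simpa [show h' = h from he] using hm⟩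
  set f : H → A := fun h => φ ⟨((hex h).choose, h), (hex h).choose_spec⟩ *
      (α (hex h).choose)⁻¹ with hf
  have key : ∀ (g : G) (h : H) (hm : ((g, h) : G × H) ∈ U),
      f h = φ ⟨(g, h), hm⟩ * (α g)⁻¹ := by
    intro g h hm
    set g' := (hex h).choose with hg'
    have hm' : ((g', h) : G × H) ∈ U := (hex h).choose_spec
    have hk : ((g' * g⁻¹, (1 : H)) : G × H) ∈ U := by
      have := mul_mem hm' (inv_mem hm)
      simpa using this
    have h1 : φ ⟨(g', h), hm'⟩ = φ ⟨(g' * g⁻¹, 1), hk⟩ * φ ⟨(g, h), hm⟩ := by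
      rw [← map_mul]
      congr 1
      ext <;> simp
    have h2 : α g' = φ ⟨(g' * g⁻¹, 1), hk⟩ * α g := by
      rw [← hα _ hk, ← map_mul]
      congr 1
      group
    show φ ⟨(g', h), hm'⟩ * (α g')⁻¹ = _
    rw [h1, h2, mul_inv]
    simp [mul_assoc, mul_comm, mul_left_comm]
  have fmul : ∀ h₁ h₂ : H, f (h₁ * h₂) = f h₁ * f h₂ := by
    intro h₁ h₂
    obtain ⟨g₁, hm₁⟩ := hex h₁
    obtain ⟨g₂, hm₂⟩ := hex h₂
    have hm : ((g₁ * g₂, h₁ * h₂) : G × H) ∈ U := by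
      have := mul_mem hm₁ hm₂
      simpa using this
    rw [key _ _ hm, key _ _ hm₁, key _ _ hm₂]
    have : φ ⟨(g₁ * g₂, h₁ * h₂), hm⟩ = φ ⟨(g₁, h₁), hm₁⟩ * φ ⟨(g₂, h₂), hm₂⟩ := by
      rw [← map_mul]; rfl
    rw [this, map_mul, mul_inv]
    simp [mul_assoc, mul_comm, mul_left_comm]
  let β : H →* A := MonoidHom.mk' f fmul
  refine ⟨(α.comp (MonoidHom.fst G H)) * (β.comp (MonoidHom.snd G H)), ?_⟩
  rintro ⟨⟨g, h⟩, hm⟩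
  have hk := key g h hm
  show α g * f h = φ ⟨(g, h), hm⟩
  rw [hk]
  simp [mul_assoc, mul_comm, mul_left_comm]
end

section
/- Let G and H be finite groups, A an abelian group, U ≤ G × H with p₁(U) = G and p₂(U) = H, and φ : U → A a homomorphism. Define φ₁ : k₁(U) → A by φ₁(g) = φ(g,1) and φ₂ : k₂(U) → A by φ₂(h) = φ(1,h)⁻¹. Then φ₁ extends to a homomorphism G → A if and only if φ₂ extends to a homomorphism H → A. -/
/-! Both conditions say that `φ` extends to a homomorphism `G × H → A`. Given `α` extending `φ₁`,
the homomorphism `u ↦ φ u / α u.1` on `U` kills `U ∩ (G × 1)`, hence factors through the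
surjection `U → H` as some `β`, and then `(g, h) ↦ α g * β h` extends `φ`; in particular `β`
agrees with `φ` on `1 × k₂(U)`, so `β⁻¹` extends `φ₂`. The converse is the same argument with the
factors exchanged. -/

theorem MonoidHom.exists_map_mul_map_eq {U G H A : Type*} [Group U] [Group G] [Group H]
    [CommGroup A] (f : U →* G) {s : U →* H} (hs : Function.Surjective s) (φ : U →* A)
    (α : G →* A) (hα : ∀ u, s u = 1 → α (f u) = φ u) :
    ∃ β : H →* A, ∀ u, α (f u) * β (s u) = φ u := by
  have hker : s.ker ≤ (φ / α.comp f).ker := fun u hu ↦ by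
    simp [hα u (mem_ker.mp hu)]
  refine ⟨s.liftOfSurjective hs ⟨φ / α.comp f, hker⟩, fun u ↦ ?_⟩
  simp

theorem Subgroup.surjective_domRestrict_of_map_eq_top {G H : Type*} [Group G] [Group H]
    {U : Subgroup G} {f : G →* H} (hU : U.map f = ⊤) : Function.Surjective (f.domRestrict U) :=
  MonoidHom.range_eq_top.mp (by rw [MonoidHom.domRestrict_range, hU])

theorem stmt_1_general {G H A : Type*} [Group G] [Group H] [CommGroup A]
    (U : Subgroup (G × H))
    (hp1 : U.map (MonoidHom.fst G H) = ⊤)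
    (hp2 : U.map (MonoidHom.snd G H) = ⊤)
    (φ : ↥U →* A) :
    (∃ α : G →* A, ∀ (g : G) (hg : ((g, (1 : H)) : G × H) ∈ U), α g = φ ⟨(g, 1), hg⟩) ↔
      (∃ β : H →* A, ∀ (h : H) (hh : (((1 : G), h) : G × H) ∈ U),
        β h = (φ ⟨(1, h), hh⟩)⁻¹) := by
  constructor
  · rintro ⟨α, hα⟩
    obtain ⟨β, hβ⟩ := ((MonoidHom.fst G H).domRestrict U).exists_map_mul_map_eq
      (Subgroup.surjective_domRestrict_of_map_eq_top hp2) φ α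
      (by rintro ⟨⟨g, h⟩, hu⟩ (rfl : h = 1); exact hα g hu)
    refine ⟨β⁻¹, fun h hh ↦ ?_⟩
    simpa using hβ ⟨(1, h), hh⟩
  · rintro ⟨β, hβ⟩
    obtain ⟨α, hα⟩ := ((MonoidHom.snd G H).domRestrict U).exists_map_mul_map_eq
      (Subgroup.surjective_domRestrict_of_map_eq_top hp1) φ β⁻¹
      (by rintro ⟨⟨g, h⟩, hu⟩ (rfl : g = 1); simp [hβ h hu])
    exact ⟨α, fun g hg ↦ by simpa using hα ⟨(g, 1), hg⟩⟩

theorem stmt_1 {G H A : Type*} [Group G] [Group H] [CommGroup A]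
    [Finite G] [Finite H]
    (U : Subgroup (G × H))
    (hp1 : U.map (MonoidHom.fst G H) = ⊤)
    (hp2 : U.map (MonoidHom.snd G H) = ⊤)
    (φ : ↥U →* A) :
    (∃ α : G →* A, ∀ (g : G) (hg : ((g, (1 : H)) : G × H) ∈ U), α g = φ ⟨(g, 1), hg⟩) ↔
      (∃ β : H →* A, ∀ (h : H) (hh : (((1 : G), h) : G × H) ∈ U),
        β h = (φ ⟨(1, h), hh⟩)⁻¹) :=
  stmt_1_general U hp1 hp2 φ
end

section
/- Let A be an abelian group with the property that whenever A contains elements of orders k and l, it contains an element of order lcm(k,l) (e.g. A a subgroup of the units of a field). Let G be a finite group such that Hom(G,A) is finite. Then O(G) = ⋂_{φ ∈ Hom(G,A)} ker φ is the smallest subgroup M of G with [G,G] ≤ M ≤ G such that A has an element of order exp(G/M). -/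
/-!
If `[G, G] ≤ M` and `A` has an element `a` of order `exp (G ⧸ M)`, then the cyclic group
`⟨a⟩` has enough roots of unity for the finite abelian group `G ⧸ M`, so homomorphisms
`G ⧸ M → A` separate points and `O(G) ≤ M`. Conversely, if `O(G) ≤ M`, then `[G, G] ≤ O(G) ≤ M`,
and `g ^ L ∈ O(G) ≤ M` for `L` the lcm of the orders of all `φ g`; thus `exp (G ⧸ M)` divides `L`,
which is the order of an element of `A` by the lcm hypothesis, and orders are closed under
taking divisors.
-/

open Subgroup

instance hasEnoughRootsOfUnity_zpowers {A : Type*} [CommGroup A] (a : A) :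
    HasEnoughRootsOfUnity (zpowers a) (orderOf a) where
  prim := ⟨⟨a, mem_zpowers a⟩, orderOf_mk a _ ▸ IsPrimitiveRoot.orderOf _⟩
  cyc :=
    have : IsCyclic (zpowers a)ˣ := isCyclic_of_surjective _ (toUnits (G := zpowers a)).surjective
    inferInstance

theorem CommGroup.exists_monoidHom_apply_ne_one_of_orderOf_eq_exponent {H A : Type*}
    [CommGroup H] [Finite H] [CommGroup A] {a : A} (ha : orderOf a = Monoid.exponent H)
    {x : H} (hx : x ≠ 1) : ∃ φ : H →* A, φ x ≠ 1 := by
  have : HasEnoughRootsOfUnity (zpowers a) (Monoid.exponent H) := ha ▸ inferInstance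
  obtain ⟨φ, hφ⟩ := exists_apply_ne_one_of_hasEnoughRootsOfUnity H (zpowers a) hx
  exact ⟨((zpowers a).subtype.comp toUnits.symm.toMonoidHom).comp φ, by simpa using hφ⟩

open scoped IsMulCommutative in
theorem iInf_ker_le_of_orderOf_eq_exponent {G A : Type*} [Group G] [CommGroup A]
    {M : Subgroup G} [M.Normal] [Finite (G ⧸ M)] (hcomm : commutator G ≤ M) {a : A}
    (ha : orderOf a = Monoid.exponent (G ⧸ M)) :
    ⨅ φ : G →* A, φ.ker ≤ M := by
  have := Normal.quotient_commutative_iff_commutator_le.mpr hcomm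
  intro g hg
  by_contra hgM
  obtain ⟨χ, hχ⟩ := CommGroup.exists_monoidHom_apply_ne_one_of_orderOf_eq_exponent ha
    (mt (QuotientGroup.eq_one_iff g).mp hgM)
  exact hχ (mem_iInf.mp hg (χ.comp (QuotientGroup.mk' M)))

theorem commutator_le_iInf_ker (G A : Type*) [Group G] [CommGroup A] :
    commutator G ≤ ⨅ φ : G →* A, φ.ker :=
  le_iInf fun φ => Abelianization.commutator_subset_ker φ

theorem exists_orderOf_eq_finset_lcm {A ι : Type*} [CommGroup A]
    (hA : ∀ a b : A, 0 < orderOf a → 0 < orderOf b →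
      ∃ c : A, orderOf c = Nat.lcm (orderOf a) (orderOf b))
    (s : Finset ι) (f : ι → A) (hf : ∀ i ∈ s, 0 < orderOf (f i)) :
    ∃ a : A, orderOf a = s.lcm (orderOf ∘ f) := by
  classical
  induction s using Finset.induction with
  | empty => exact ⟨1, by simp⟩
  | insert i s _ ih =>
    obtain ⟨b, hb⟩ := ih fun j hj => hf j (Finset.mem_insert_of_mem hj)
    have hb_pos : 0 < orderOf b := hb ▸ Nat.pos_of_ne_zero
      (Finset.lcm_ne_zero_iff.mpr fun j hj => (hf j (Finset.mem_insert_of_mem hj)).ne')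
    obtain ⟨c, hc⟩ := hA (f i) b (hf i (Finset.mem_insert_self i s)) hb_pos
    exact ⟨c, by rw [hc, hb, Finset.lcm_insert]; rfl⟩

theorem exponent_quotient_dvd_lcm_orderOf_apply {G A : Type*} [Group G] [CommGroup A]
    [Fintype G] [Fintype (G →* A)] {M : Subgroup G} [M.Normal] (hM : ⨅ φ : G →* A, φ.ker ≤ M) :
    Monoid.exponent (G ⧸ M) ∣ Finset.univ.lcm fun p : (G →* A) × G => orderOf (p.1 p.2) := by
  refine Monoid.exponent_dvd.mpr fun x => QuotientGroup.induction_on x fun g => ?_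
  refine orderOf_dvd_of_pow_eq_one ?_
  rw [← QuotientGroup.mk_pow, QuotientGroup.eq_one_iff]
  refine hM (mem_iInf.mpr fun φ => ?_)
  rw [MonoidHom.mem_ker, map_pow]
  exact orderOf_dvd_iff_pow_eq_one.mp (Finset.dvd_lcm (Finset.mem_univ (φ, g)))

theorem exists_orderOf_eq_exponent_quotient_of_iInf_ker_le {G A : Type*} [Group G] [CommGroup A]
    [Finite G] [Finite (G →* A)]
    (hA : ∀ a b : A, 0 < orderOf a → 0 < orderOf b →
      ∃ c : A, orderOf c = Nat.lcm (orderOf a) (orderOf b))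
    {M : Subgroup G} [M.Normal] (hM : ⨅ φ : G →* A, φ.ker ≤ M) :
    ∃ a : A, orderOf a = Monoid.exponent (G ⧸ M) := by
  have := Fintype.ofFinite G
  have := Fintype.ofFinite (G →* A)
  have hpos : ∀ p ∈ (Finset.univ : Finset ((G →* A) × G)), 0 < orderOf (p.1 p.2) :=
    fun p _ => Nat.pos_of_dvd_of_pos (orderOf_map_dvd p.1 p.2) (orderOf_pos p.2)
  obtain ⟨c, hc⟩ := exists_orderOf_eq_finset_lcm hA _ _ hpos
  have hc0 : orderOf c ≠ 0 := hc ▸ Finset.lcm_ne_zero_iff.mpr fun p hp => (hpos p hp).ne'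
  have hdvd := exponent_quotient_dvd_lcm_orderOf_apply hM
  exact ⟨c ^ (orderOf c / Monoid.exponent (G ⧸ M)), orderOf_pow_orderOf_div hc0 (hc ▸ hdvd)⟩

theorem stmt_7 {A : Type*} [CommGroup A] (G : Type*) [Group G] [Finite G]
    [Finite (G →* A)]
    (hA : ∀ a b : A, 0 < orderOf a → 0 < orderOf b →
      ∃ c : A, orderOf c = Nat.lcm (orderOf a) (orderOf b))
    (M : Subgroup G) [M.Normal] :
    (commutator G ≤ M ∧ ∃ a : A, orderOf a = Monoid.exponent (G ⧸ M)) ↔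
      (⨅ φ : G →* A, φ.ker) ≤ M :=
  ⟨fun ⟨hcomm, _, ha⟩ => iInf_ker_le_of_orderOf_eq_exponent hcomm ha,
    fun hM => ⟨(commutator_le_iInf_ker G A).trans hM,
      exists_orderOf_eq_exponent_quotient_of_iInf_ker_le hA hM⟩⟩
end

section
/- Let A be an abelian group whose torsion subgroup is locally cyclic (e.g. A ≤ 𝕂ˣ for a field 𝕂), let G be a finite group with Hom(G,A) finite, and let N be a normal subgroup of G. Then O(G/N) = O(G)N/N, where O(H) := ⋂_{φ ∈ Hom(H,A)} ker φ for a finite group H. -/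
/-!
Put `O(G) = ⋂_{φ : G → A} ker φ` and `K = O(G) N`. Every `φ : G → A` takes values in the
subgroup `B ≤ A` generated by the (finitely many, finite) ranges of such `φ`, so `B` is finite,
hence cyclic, and `G / K` is abelian of exponent dividing `|B|`. Then `B` contains enough roots of
unity for the characters `G / K → B` to separate points, so `K` is cut out by homomorphisms
`G → A` that kill `N`, i.e. by homomorphisms `G / N → A`.
-/

open QuotientGroup

open commutatorElement in
abbrev QuotientGroup.commGroupOfCommutatorLE {G : Type*} [Group G] {K : Subgroup G} [K.Normal]
    (hK : commutator G ≤ K) : CommGroup (G ⧸ K) where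
  mul_comm := by
    rintro ⟨a⟩ ⟨b⟩
    refine (QuotientGroup.eq (a := a * b) (b := b * a)).2 ?_
    have : (a * b)⁻¹ * (b * a) = ⁅b⁻¹, a⁻¹⁆ := by group
    rw [this]
    exact hK (Subgroup.commutator_mem_commutator (Subgroup.mem_top _) (Subgroup.mem_top _))

theorem Subgroup.finite_iSup_of_commGroup {A ι : Type*} [CommGroup A] [Finite ι]
    (H : ι → Subgroup A) [∀ i, Finite (H i)] : Finite ↥(⨆ i, H i) := by
  have := Fintype.ofFinite ι
  rw [← Subgroup.noncommPiCoprod_range (hcomm := fun _ _ _ x y _ _ ↦ Commute.all x y)]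
  exact Set.finite_range _ |>.to_subtype

theorem IsCyclic.hasEnoughRootsOfUnity_of_dvd_natCard {B : Type*} [CommGroup B] [Finite B]
    [IsCyclic B] {n : ℕ} (hn : n ∣ Nat.card B) : HasEnoughRootsOfUnity B n := by
  have : HasEnoughRootsOfUnity B (Nat.card B) := by
    obtain ⟨g, hg⟩ := IsCyclic.exists_ofOrder_eq_natCard (α := B)
    have : IsCyclic Bˣ := isCyclic_of_surjective toUnits toUnits.surjective
    exact ⟨⟨g, hg ▸ IsPrimitiveRoot.orderOf g⟩, Subgroup.isCyclic _⟩
  exact HasEnoughRootsOfUnity.of_dvd B hn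

/-- The subgroup `O(G)` of the paper. -/
def commonKer (A G : Type*) [CommGroup A] [Group G] : Subgroup G :=
  ⨅ φ : G →* A, φ.ker

section commonKer

variable {A G : Type*} [CommGroup A] [Group G]

theorem mem_commonKer {g : G} : g ∈ commonKer A G ↔ ∀ φ : G →* A, φ g = 1 := by
  simp only [commonKer, Subgroup.mem_iInf, MonoidHom.mem_ker]

instance commonKer_normal : (commonKer A G).Normal :=
  Subgroup.normal_iInf_normal fun φ ↦ φ.normal_ker

theorem commutator_le_commonKer : commutator G ≤ commonKer A G :=
  le_iInf fun φ ↦ Abelianization.commutator_subset_ker φ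

theorem map_commonKer_le {H : Type*} [Group H] (f : G →* H) :
    (commonKer A G).map f ≤ commonKer A H := by
  rintro _ ⟨g, hg, rfl⟩
  exact mem_commonKer.2 fun ψ ↦ mem_commonKer.1 hg (ψ.comp f)

theorem pow_natCard_mem_commonKer {B : Subgroup A} [Finite B]
    (hB : ∀ φ : G →* A, φ.range ≤ B) (g : G) : g ^ Nat.card B ∈ commonKer A G := by
  refine mem_commonKer.2 fun φ ↦ ?_
  rw [map_pow]
  exact congrArg Subtype.val (pow_card_eq_one' (G := B) (x := ⟨φ g, hB φ ⟨g, rfl⟩⟩))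

theorem exists_le_ker_apply_ne_one [Finite G] [Finite (G →* A)]
    (hA : ∀ B : Subgroup A, Finite B → IsCyclic B) {K : Subgroup G} [K.Normal]
    (hK : commonKer A G ≤ K) {x : G} (hx : x ∉ K) :
    ∃ f : G →* A, K ≤ f.ker ∧ f x ≠ 1 := by
  let B : Subgroup A := ⨆ φ : G →* A, φ.range
  have (φ : G →* A) : Finite φ.range := (Set.finite_range φ).to_subtype
  have : Finite B := Subgroup.finite_iSup_of_commGroup _
  have : IsCyclic B := hA B ‹_›
  have hB (φ : G →* A) : φ.range ≤ B := le_iSup (fun φ : G →* A ↦ φ.range) φ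
  let _ := commGroupOfCommutatorLE (commutator_le_commonKer.trans hK)
  have hexp : Monoid.exponent (G ⧸ K) ∣ Nat.card B :=
    Monoid.exponent_dvd_of_forall_pow_eq_one fun q ↦ QuotientGroup.induction_on q fun g ↦ by
      rw [← mk_pow, eq_one_iff]
      exact hK (pow_natCard_mem_commonKer hB g)
  have := IsCyclic.hasEnoughRootsOfUnity_of_dvd_natCard hexp
  obtain ⟨χ, hχ⟩ := CommGroup.exists_apply_ne_one_of_hasEnoughRootsOfUnity (G ⧸ K) B
    (a := (x : G ⧸ K)) (by rwa [Ne, eq_one_iff])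
  refine ⟨B.subtype.comp ((Units.coeHom B).comp (χ.comp (mk' K))), fun k hk ↦ ?_, ?_⟩
  · simp [(eq_one_iff k).2 hk]
  · simpa using hχ

theorem commonKer_quotient_eq_map [Finite G] [Finite (G →* A)]
    (hA : ∀ B : Subgroup A, Finite B → IsCyclic B) (N : Subgroup G) [N.Normal] :
    commonKer A (G ⧸ N) = (commonKer A G).map (mk' N) := by
  refine le_antisymm (fun q hq ↦ ?_) (map_commonKer_le _)
  induction q using QuotientGroup.induction_on with | H x => ?_
  change mk' N x ∈ _
  rw [← Subgroup.mem_comap, Subgroup.comap_map_eq, ker_mk']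
  by_contra hx
  obtain ⟨f, hKf, hfx⟩ := exists_le_ker_apply_ne_one hA le_sup_left hx
  exact hfx (mem_commonKer.1 hq (lift N f (le_sup_right.trans hKf)))

end commonKer

theorem stmt_8 {A : Type*} [CommGroup A] (G : Type*) [Group G] [Finite G]
    [Finite (G →* A)]
    (hA : ∀ B : Subgroup A, Finite ↥B → IsCyclic ↥B)
    (N : Subgroup G) [N.Normal] :
    (⨅ ψ : (G ⧸ N) →* A, ψ.ker) =
      Subgroup.map (QuotientGroup.mk' N) (⨅ φ : G →* A, φ.ker) :=
  commonKer_quotient_eq_map hA N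
end

section
/- Let A ≤ 𝕂ˣ for a field 𝕂 of characteristic 0, and let G be a finite group with Hom(G,A) finite. For a subgroup K ≤ G and an element g ∈ G, the evaluation character ε_g : Hom(G,A) → 𝕂ˣ, ε_g(φ) = φ(g), is trivial on K^⊥ = {φ ∈ Hom(G,A) | φ|_K = 1} if and only if g ∈ K·O(G), where O(G) = ⋂_{φ ∈ Hom(G,A)} ker φ. -/
/-!
The evaluation map `G →* A ^ Hom(G, A)` has kernel `O(G)`, so its image `H ≅ G ⧸ O(G)` is a
finite abelian group, say of exponent `e`. Every coordinate of an element of `H` is an `e`-th root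
of unity in `A`, so these roots of unity form a finite abelian group whose exponent is again `e`;
hence `A` contains a primitive `e`-th root of unity, and its `e`-th roots of unity form a cyclic
group since `A ≤ 𝕂ˣ`. Characters of `H` with values in `A` therefore separate `H` modulo the image
of `K`.
-/

theorem exponent_rootsOfUnity_exponent_subgroup_pi {M ι : Type*} [CommGroup M]
    (H : Subgroup (ι → M)) [Finite H] :
    Monoid.exponent (rootsOfUnity (Monoid.exponent H) M) = Monoid.exponent H := by
  set n := Monoid.exponent H
  refine Nat.dvd_antisymm
    (Monoid.exponent_dvd_of_forall_pow_eq_one fun ζ => Subtype.ext ζ.2) ?_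
  refine Monoid.exponent_dvd_of_forall_pow_eq_one fun h => Subtype.ext (funext fun i => ?_)
  have hn : ((h : ι → M) i) ^ n = 1 :=
    congrFun (congrArg Subtype.val (Monoid.pow_exponent_eq_one h)) i
  have hmem : toUnits ((h : ι → M) i) ∈ rootsOfUnity n M := by
    rw [mem_rootsOfUnity, ← map_pow, hn, map_one]
  have := Monoid.pow_exponent_eq_one (⟨_, hmem⟩ : rootsOfUnity n M)
  simpa using congrArg (fun ξ : rootsOfUnity n M => ((ξ : Mˣ) : M)) this

namespace Subgroup

variable {R : Type*} [CommRing R] [IsDomain R] (A : Subgroup Rˣ)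

theorem finite_rootsOfUnity (n : ℕ) [NeZero n] : Finite (rootsOfUnity n A) := by
  refine Finite.of_injective (restrictRootsOfUnity ((Units.coeHom R).comp A.subtype) n) ?_
  intro x y hxy
  apply rootsOfUnity.coe_injective
  have := congrArg (fun ξ : rootsOfUnity n R => ((ξ : Rˣ) : R)) hxy
  exact Subtype.val_injective (Units.val_injective this)

theorem isCyclic_rootsOfUnity (n : ℕ) [NeZero n] : IsCyclic (rootsOfUnity n A) :=
  have := A.finite_rootsOfUnity n
  isCyclic_of_injective_ringHom
    ((Units.coeHom R).comp (A.subtype.comp ((Units.coeHom A).comp (rootsOfUnity n A).subtype)))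
    (Units.val_injective.comp (A.subtype_injective.comp
      (Units.val_injective.comp (rootsOfUnity n A).subtype_injective)))

theorem hasEnoughRootsOfUnity_of_orderOf_eq {n : ℕ} [NeZero n] {ζ : A} (hζ : orderOf ζ = n) :
    HasEnoughRootsOfUnity A n where
  prim := ⟨ζ, hζ ▸ IsPrimitiveRoot.orderOf ζ⟩
  cyc := A.isCyclic_rootsOfUnity n

theorem hasEnoughRootsOfUnity_exponent_subgroup_pi {ι : Type*} (H : Subgroup (ι → A))
    [Finite H] : HasEnoughRootsOfUnity A (Monoid.exponent H) := by
  set n := Monoid.exponent H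
  have : NeZero n := ⟨Monoid.exponent_ne_zero_of_finite⟩
  have := A.finite_rootsOfUnity n
  obtain ⟨ζ, hζ⟩ := Monoid.exists_orderOf_eq_exponent
    (Monoid.ExponentExists.of_finite (G := rootsOfUnity n A))
  rw [exponent_rootsOfUnity_exponent_subgroup_pi H] at hζ
  refine A.hasEnoughRootsOfUnity_of_orderOf_eq (ζ := (ζ : Aˣ)) ?_
  rwa [orderOf_units, Subgroup.orderOf_coe]

end Subgroup

theorem CommGroup.exists_mem_apply_eq_of_forall_monoidHom {G H M : Type*} [Group G]
    [CommGroup H] [Finite H] [CommMonoid M] [HasEnoughRootsOfUnity M (Monoid.exponent H)]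
    (Φ : G →* H) (K : Subgroup G) (g : G) (hg : ∀ φ : G →* M, (∀ k ∈ K, φ k = 1) → φ g = 1) :
    ∃ k ∈ K, Φ k = Φ g := by
  rw [← Subgroup.mem_map, ← CommGroup.forall_monoidHom_apply_eq_one_iff M]
  intro χ hχ
  refine Units.ext (hg ((Units.coeHom M).comp (χ.comp Φ)) fun k hk => ?_)
  simp [hχ (Φ k) (Subgroup.mem_map_of_mem Φ hk)]

theorem stmt_10_general {𝕂 : Type*} [Field 𝕂] (A : Subgroup 𝕂ˣ)
    (G : Type*) [Group G] [Finite G]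
    (K : Subgroup G) (g : G) :
    (∀ φ : G →* ↥A, (∀ k ∈ K, φ k = 1) → ((φ g : ↥A) : 𝕂ˣ) = 1) ↔
      ∃ k ∈ K, k⁻¹ * g ∈ ⨅ φ : G →* ↥A, φ.ker := by
  let Φ : G →* ((G →* A) → A) := MonoidHom.pi fun φ => φ
  have : Finite Φ.range := Finite.of_surjective _ Φ.rangeRestrict_surjective
  have := A.hasEnoughRootsOfUnity_exponent_subgroup_pi Φ.range
  simp only [Subgroup.mem_iInf, MonoidHom.mem_ker, map_mul, map_inv, inv_mul_eq_one,
    OneMemClass.coe_eq_one]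
  constructor
  · intro hg
    obtain ⟨k, hk, hkg⟩ :=
      CommGroup.exists_mem_apply_eq_of_forall_monoidHom Φ.rangeRestrict K g hg
    exact ⟨k, hk, fun φ => congrFun (congrArg Subtype.val hkg) φ⟩
  · rintro ⟨k, hk, hkg⟩ φ hφ
    rw [← hkg φ, hφ k hk]

theorem stmt_10 {𝕂 : Type*} [Field 𝕂] [CharZero 𝕂] (A : Subgroup 𝕂ˣ)
    (G : Type*) [Group G] [Finite G] [Finite (G →* ↥A)]
    (K : Subgroup G) (g : G) :
    (∀ φ : G →* ↥A, (∀ k ∈ K, φ k = 1) → ((φ g : ↥A) : 𝕂ˣ) = 1) ↔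
      ∃ k ∈ K, k⁻¹ * g ∈ ⨅ φ : G →* ↥A, φ.ker :=
  stmt_10_general A G K g
end

section
/- Under the hypotheses of the previous statement, for (H,Φ) ∈ 𝒳(G) the primitive idempotent e^G_{(H,Φ)} of B^A_𝕂(G) is given by e^G_{(H,Φ)} = (1/(|N_G(H,Φ)|·|H*|)) ∑_{K ≤ H, Φ|_{K^⊥}=1} ∑_{φ ∈ H*} |K|·μ(K,H)·Φ(φ⁻¹)·[K, φ|_K]_G, where μ is the Möbius function of the subgroup lattice of H, K^⊥ = {φ ∈ H* : φ|_K = 1}, and N_G(H,Φ) is the stabilizer of (H,Φ) under G-conjugation. -/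
/-!
Both sides are compared through the species `s_{(L,Ψ)}`, which jointly separate the elements of
`B^A_𝕂(G)`. Summing over all of `G` instead of over double coset representatives gives
`|U| · s_{(L,Ψ)}[U,φ]_G = ∑_{g ∈ G, L ≤ ᵍU} Ψ(ᵍφ|_L)`, so the factor `|K|` of the formula cancels.
For fixed `g`, the sum over `φ ∈ H*` is a character orthogonality relation on `H*`: it vanishes
unless `Φ = Ψ ∘ (ᵍ·)|_L`, in which case `Φ|_{K^⊥} = 1` holds automatically for `ᵍ⁻¹L ≤ K`, and
the remaining `∑_{ᵍ⁻¹L ≤ K ≤ H} μ(K,H)` is `[ᵍ⁻¹L = H]`. Hence the species of the right-hand side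
at `(L,Ψ)` is `|H*| · #{g | ᵍ(H,Φ) = (L,Ψ)} / (|N_G(H,Φ)| |H*|)`, that is `1` or `0`.

The species separate: if all of them vanish on `∑ c_q [q]_G`, pick `p₀ = (U₀,φ₀)` with `|U₀|`
maximal and average `Ψ(φ₀)⁻¹ s_{(U₀,Ψ)}` over `Ψ ∈ Hom(U₀*, 𝕂ˣ)`. Dual orthogonality (this is
where the roots of unity in `𝕂` enter) and maximality leave exactly the pairs conjugate to `p₀`,
all with the same nonzero weight; so their coefficients sum to zero, their part of the sum
vanishes, and induction removes that conjugacy class.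
-/

open scoped Classical

section FiberedBurnside

variable {A : Type*} [CommGroup A]

/-- Conjugation action on pairs `(U, φ)` with `U ≤ G` and `φ : U →* A`:
`ᵍ(U,φ) = (ᵍU, ᵍφ)`. -/
def pairConj {G : Type*} [Group G] (g : G) (p : Σ U : Subgroup G, (↥U →* A)) :
    Σ U : Subgroup G, (↥U →* A) :=
  ⟨p.1.map ((MulAut.conj g : G ≃* G) : G →* G),
    p.2.comp ((MulEquiv.subgroupMap (MulAut.conj g : G ≃* G) p.1).symm.toMonoidHom)⟩

/-- `R` is a set of representatives for the `(H,K)`-double cosets in `G`. -/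
def IsDCR {G : Type*} [Group G] (H K : Subgroup G) (R : Finset G) : Prop :=
  (∀ x : G, ∃ r ∈ R, ∃ h ∈ H, ∃ k ∈ K, x = h * r * k) ∧
    ∀ r ∈ R, ∀ r' ∈ R, (∃ h ∈ H, ∃ k ∈ K, r' = h * r * k) → r = r'

/-- The pair `(U ∩ ᵍV, φ|·(ᵍψ)|)` occurring in the product formula. -/
def mulPair {G : Type*} [Group G] (p q : Σ U : Subgroup G, (↥U →* A)) (g : G) :
    Σ U : Subgroup G, (↥U →* A) :=
  ⟨p.1 ⊓ (pairConj g q).1,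
    (p.2.comp (Subgroup.inclusion inf_le_left)) *
      ((pairConj g q).2.comp (Subgroup.inclusion inf_le_right))⟩

/-- Data exhibiting a `𝕂`-algebra `B` as the `A`-fibered Burnside algebra `B^A_𝕂(G)`:
the standard basis elements `b (U,φ) = [U,φ]_G` are conjugation invariant, span, are
linearly independent over pairwise non-conjugate pairs, `[G,1]_G = 1`, and multiply by the
double coset formula. -/
structure FiberedBurnsideData (A : Type*) [CommGroup A] (G : Type*) [Group G]
    (𝕂 : Type*) [Field 𝕂] (B : Type*) [Ring B] [Algebra 𝕂 B] where
  b : (Σ U : Subgroup G, (↥U →* A)) → B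
  b_conj : ∀ (g : G) (p), b (pairConj g p) = b p
  b_one : b ⟨⊤, 1⟩ = 1
  b_span : Submodule.span 𝕂 (Set.range b) = ⊤
  b_indep : ∀ s : Finset (Σ U : Subgroup G, (↥U →* A)),
      (∀ p ∈ s, ∀ q ∈ s, (∃ g : G, pairConj g p = q) → p = q) →
      LinearIndependent 𝕂 (fun p : {x // x ∈ s} => b p.1)
  b_mul : ∀ (p q) (R : Finset G), IsDCR p.1 q.1 R →
      b p * b q = ∑ r ∈ R, b (mulPair p q r)

end FiberedBurnside

/-- Conjugation action on pairs `(H, Φ)` with `H ≤ G` and `Φ` a `C`-valued character of the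
character group `Hom(H,A)`:  `ᵍ(H,Φ) = (ᵍH, ᵍΦ)` where `ᵍΦ(φ') = Φ(ᵍ⁻¹φ')`. -/
def charPairConj {G : Type*} [Group G] {A : Type*} [CommGroup A] {C : Type*} [CommGroup C]
    (g : G) (x : Σ H : Subgroup G, ((↥H →* A) →* C)) :
    Σ H : Subgroup G, ((↥H →* A) →* C) :=
  ⟨x.1.map ((MulAut.conj g : G ≃* G) : G →* G),
    x.2.comp
      { toFun := fun φ' =>
          φ'.comp ((MulEquiv.subgroupMap (MulAut.conj g : G ≃* G) x.1).toMonoidHom)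
        map_one' := MonoidHom.one_comp _
        map_mul' := fun _ _ => MonoidHom.mul_comp _ _ _ }⟩

section Conjugation

variable {G : Type*} [Group G]

theorem mem_map_conj_iff {U : Subgroup G} {g x : G} :
    x ∈ U.map (MulAut.conj g).toMonoidHom ↔ g⁻¹ * x * g ∈ U := by
  rw [Subgroup.mem_map_equiv, MulAut.conj_symm_apply]

theorem map_conj_one (U : Subgroup G) : U.map (MulAut.conj (1 : G)).toMonoidHom = U :=
  Subgroup.ext fun x => by simp

theorem map_conj_mul (U : Subgroup G) (g h : G) :
    U.map (MulAut.conj (g * h)).toMonoidHom =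
      (U.map (MulAut.conj h).toMonoidHom).map (MulAut.conj g).toMonoidHom :=
  Subgroup.ext fun x => by simp only [mem_map_conj_iff, mul_inv_rev, mul_assoc]

theorem map_conj_inv_le_iff {L K : Subgroup G} {g : G} :
    L.map (MulAut.conj g⁻¹).toMonoidHom ≤ K ↔ L ≤ K.map (MulAut.conj g).toMonoidHom := by
  simp only [SetLike.le_def, mem_map_conj_iff, inv_inv]
  exact ⟨fun h x hx => h (by simpa [mul_assoc] using hx),
    fun h x hx => by simpa [mul_assoc] using h hx⟩

theorem map_conj_eq_self {U : Subgroup G} {u : G} (hu : u ∈ U) :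
    U.map (MulAut.conj u).toMonoidHom = U :=
  Subgroup.ext fun x => by
    rw [mem_map_conj_iff]
    exact ⟨fun h => by simpa [mul_assoc] using U.mul_mem (U.mul_mem hu h) (U.inv_mem hu),
      fun h => U.mul_mem (U.mul_mem (U.inv_mem hu) h) hu⟩

end Conjugation

section Pairs

variable {A G : Type*} [CommGroup A] [Group G]

theorem pair_ext {p q : Σ U : Subgroup G, (↥U →* A)} (h : p.1 = q.1)
    (h' : ∀ x (hp : x ∈ p.1) (hq : x ∈ q.1), p.2 ⟨x, hp⟩ = q.2 ⟨x, hq⟩) : p = q := by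
  obtain ⟨U, φ⟩ := p
  obtain ⟨V, ψ⟩ := q
  obtain rfl : U = V := h
  congr
  ext x
  exact h' x x.2 x.2

theorem pairConj_snd_apply (g : G) (p : Σ U : Subgroup G, (↥U →* A)) {x : G}
    (hx : x ∈ (pairConj g p).1) :
    (pairConj g p).2 ⟨x, hx⟩ = p.2 ⟨g⁻¹ * x * g, mem_map_conj_iff.1 hx⟩ :=
  congrArg p.2 (Subtype.ext (MulAut.conj_symm_apply g x))

theorem pairConj_one (p : Σ U : Subgroup G, (↥U →* A)) : pairConj (1 : G) p = p :=
  pair_ext (map_conj_one p.1) fun x hp hq => by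
    rw [pairConj_snd_apply]
    congr
    group

theorem pairConj_mul (g h : G) (p : Σ U : Subgroup G, (↥U →* A)) :
    pairConj (g * h) p = pairConj g (pairConj h p) :=
  pair_ext (map_conj_mul p.1 g h) fun x hp hq => by
    rw [pairConj_snd_apply, pairConj_snd_apply, pairConj_snd_apply]
    congr 2
    group

instance : MulAction G (Σ U : Subgroup G, (↥U →* A)) where
  smul := pairConj
  one_smul := pairConj_one
  mul_smul := pairConj_mul

theorem card_smul_fst (g : G) (p : Σ U : Subgroup G, (↥U →* A)) :
    Nat.card (g • p).1 = Nat.card p.1 :=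
  (Nat.card_congr (MulEquiv.subgroupMap (MulAut.conj g) p.1).toEquiv).symm

theorem smul_eq_self_of_mem {p : Σ U : Subgroup G, (↥U →* A)} {u : G} (hu : u ∈ p.1) :
    u • p = p :=
  pair_ext (map_conj_eq_self hu) fun x hp hq => by
    refine (pairConj_snd_apply u p hp).trans ?_
    have : (⟨u⁻¹ * x * u, _⟩ : ↥p.1) = ⟨u, hu⟩⁻¹ * ⟨x, hq⟩ * ⟨u, hu⟩ := rfl
    rw [this, map_mul, map_mul, map_inv, mul_comm, mul_inv_cancel_left]

end Pairs

section CharPairs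

variable {A G C : Type*} [CommGroup A] [Group G] [CommGroup C]

theorem charPair_eq_iff {U V : Subgroup G} (h : U = V) (Φ : (↥U →* A) →* C)
    (Ψ : (↥V →* A) →* C) :
    (⟨U, Φ⟩ : Σ W : Subgroup G, ((↥W →* A) →* C)) = ⟨V, Ψ⟩ ↔
      ∀ φ : ↥V →* A, Φ (φ.comp (Subgroup.inclusion h.le)) = Ψ φ := by
  subst h
  refine ⟨fun hΦ φ => ?_, fun hΦ => ?_⟩
  · cases hΦ
    rfl
  · congr
    ext φ
    exact hΦ φ

theorem charPairConj_one (x : Σ W : Subgroup G, ((↥W →* A) →* C)) : charPairConj (1 : G) x = x :=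
  (charPair_eq_iff (map_conj_one x.1) _ _).2 fun φ => congrArg x.2 <| by
    ext y
    refine congrArg φ (Subtype.ext ?_)
    change (1 : G) * y * (1 : G)⁻¹ = y
    group

theorem charPairConj_mul (g h : G) (x : Σ W : Subgroup G, ((↥W →* A) →* C)) :
    charPairConj (g * h) x = charPairConj g (charPairConj h x) :=
  (charPair_eq_iff (map_conj_mul x.1 g h) _ _).2 fun φ => congrArg x.2 <| by
    ext y
    refine congrArg φ (Subtype.ext ?_)
    change g * h * y * (g * h)⁻¹ = g * (h * y * h⁻¹) * g⁻¹
    group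

instance : MulAction G (Σ W : Subgroup G, ((↥W →* A) →* C)) where
  smul := charPairConj
  one_smul := charPairConj_one
  mul_smul := charPairConj_mul

variable (A) in
def conjRes (L H : Subgroup G) (g : G) (h : L ≤ H.map (MulAut.conj g).toMonoidHom) :
    (↥H →* A) →* (↥L →* A) :=
  MonoidHom.compHom'
    ((MulEquiv.subgroupMap (MulAut.conj g) H).symm.toMonoidHom.comp (Subgroup.inclusion h))

theorem conjRes_apply_apply {L H : Subgroup G} {g : G} (h : L ≤ H.map (MulAut.conj g).toMonoidHom)
    (φ : ↥H →* A) (x : ↥L) :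
    conjRes A L H g h φ x = φ ⟨g⁻¹ * x * g, mem_map_conj_iff.1 (h x.2)⟩ :=
  congrArg φ (Subtype.ext (MulAut.conj_symm_apply g x))

theorem charPairConj_eq_iff {H L : Subgroup G} (Φ : (↥H →* A) →* C) (Ψ : (↥L →* A) →* C) {g : G}
    (h : L ≤ H.map (MulAut.conj g).toMonoidHom) :
    charPairConj g (⟨H, Φ⟩ : Σ W : Subgroup G, ((↥W →* A) →* C)) = ⟨L, Ψ⟩ ↔
      H.map (MulAut.conj g).toMonoidHom = L ∧ Φ = Ψ.comp (conjRes A L H g h) := by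
  refine ⟨fun hx => ⟨congrArg Sigma.fst hx, ?_⟩, fun ⟨hL, hΦ⟩ => ?_⟩
  · ext φ
    rw [MonoidHom.comp_apply, ← (charPair_eq_iff (congrArg Sigma.fst hx) _ _).1 hx]
    refine congrArg Φ (MonoidHom.ext fun y => ?_)
    change φ y = φ ⟨g⁻¹ * (g * y * g⁻¹) * g, _⟩
    congr
    group
  · refine (charPair_eq_iff hL _ _).2 fun φ => ?_
    rw [hΦ]
    refine congrArg Ψ (MonoidHom.ext fun y => congrArg φ (Subtype.ext ?_))
    change g * (g⁻¹ * y * g) * g⁻¹ = y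
    group

end CharPairs

section Orthogonality

variable {M 𝕂 : Type*} [CommGroup M] [Field 𝕂]

theorem sum_units_apply_eq_ite [Fintype M] (χ : M →* 𝕂ˣ) :
    ∑ a : M, (χ a : 𝕂) = if χ = 1 then (Fintype.card M : 𝕂) else 0 := by
  by_cases hχ : χ = 1
  · simp [hχ]
  · rw [if_neg hχ]
    exact sum_hom_units_eq_zero ((Units.coeHom 𝕂).comp χ)
      fun h => hχ (MonoidHom.ext fun a => Units.ext (DFunLike.congr_fun h a))

theorem sum_apply_inv_mul_apply_eq_ite [Fintype M] (Φ Ξ : M →* 𝕂ˣ) :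
    ∑ a : M, (Φ a⁻¹ : 𝕂) * Ξ a = if Φ = Ξ then (Fintype.card M : 𝕂) else 0 := by
  have h (a : M) : (Φ a⁻¹ : 𝕂) * Ξ a = ((Φ⁻¹ * Ξ) a : 𝕂) := by
    rw [map_inv, MonoidHom.mul_apply, MonoidHom.inv_apply, Units.val_mul]
  simp_rw [h, sum_units_apply_eq_ite]
  exact if_congr (@inv_mul_eq_one (M →* 𝕂ˣ) _ Φ Ξ) rfl rfl

theorem sum_dual_apply_eq_ite [Finite M] [HasEnoughRootsOfUnity 𝕂 (Monoid.exponent M)]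
    [Fintype (M →* 𝕂ˣ)] (a : M) :
    ∑ Ψ : M →* 𝕂ˣ, (Ψ a : 𝕂) = if a = 1 then (Fintype.card (M →* 𝕂ˣ) : 𝕂) else 0 := by
  have hev : MonoidHom.eval (N := 𝕂ˣ) a = 1 ↔ a = 1 := by
    rw [← CommGroup.forall_apply_eq_apply_iff M (M := 𝕂), MonoidHom.ext_iff]
    simp
  simp_rw [← hev]
  exact sum_units_apply_eq_ite (MonoidHom.eval (N := 𝕂ˣ) a)

end Orthogonality

theorem card_smul_eq_of_mem_orbit {G X : Type*} [Group G] [MulAction G X] {a b c : X}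
    (hb : ∃ g : G, g • a = b) (hc : ∃ g : G, g • a = c) :
    Nat.card {g : G // g • b = c} = Nat.card {g : G // g • a = a} := by
  obtain ⟨g₁, rfl⟩ := hb
  obtain ⟨g₂, rfl⟩ := hc
  refine Nat.card_congr (Equiv.subtypeEquiv ((Equiv.mulLeft g₂⁻¹).trans (Equiv.mulRight g₁))
    fun g => ?_)
  simp [mul_smul, inv_smul_eq_iff]

section DoubleCosets

variable {G : Type*} [Group G]

theorem exists_isDCR [Finite G] (L U : Subgroup G) : ∃ R : Finset G, IsDCR L U R := by
  have : Finite (DoubleCoset.Quotient (L : Set G) U) := Quotient.finite _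
  have := Fintype.ofFinite (DoubleCoset.Quotient (L : Set G) U)
  refine ⟨Finset.univ.image fun q : DoubleCoset.Quotient (L : Set G) U => q.out, fun x => ?_, ?_⟩
  · obtain ⟨l, hl, u, hu, hx⟩ :=
      (DoubleCoset.eq L U _ x).1 (DoubleCoset.out_eq' L U (DoubleCoset.mk L U x))
    exact ⟨_, Finset.mem_image_of_mem _ (Finset.mem_univ _), l, hl, u, hu, hx⟩
  · simp only [Finset.mem_image, Finset.mem_univ, true_and]
    rintro _ ⟨q, rfl⟩ _ ⟨q', rfl⟩ hqq'
    have := (DoubleCoset.eq L U q.out q'.out).2 hqq'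
    rw [DoubleCoset.out_eq', DoubleCoset.out_eq'] at this
    rw [this]

theorem IsDCR.sum_ite_mem_eq {L U : Subgroup G} {R : Finset G} (hR : IsDCR L U R) {M : Type*}
    [AddCommMonoid M] (F : G → M) (g : G) :
    ∑ r ∈ R, (if ∃ l ∈ L, ∃ u ∈ U, g = l * r * u then F g else 0) = F g := by
  obtain ⟨r₀, hr₀, l₀, hl₀, u₀, hu₀, hg₀⟩ := hR.1 g
  rw [Finset.sum_eq_single_of_mem r₀ hr₀, if_pos ⟨l₀, hl₀, u₀, hu₀, hg₀⟩]
  rintro r hr hne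
  refine if_neg fun ⟨l, hl, u, hu, hg⟩ => hne (hR.2 r₀ hr₀ r hr ?_).symm
  refine ⟨l⁻¹ * l₀, L.mul_mem (L.inv_mem hl) hl₀, u₀ * u⁻¹, U.mul_mem hu₀ (U.inv_mem hu), ?_⟩
  rw [show r = l⁻¹ * g * u⁻¹ by rw [hg]; group, hg₀]
  group

theorem sum_eq_card_smul_sum_of_isDCR [Fintype G] {L U : Subgroup G} {R : Finset G}
    (hR : IsDCR L U R) {M : Type*} [AddCommMonoid M] (F : G → M)
    (hF : ∀ g, ∀ l ∈ L, ∀ u ∈ U, F (l * g * u) = F g)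
    (hF₀ : ∀ g, F g ≠ 0 → L ≤ U.map (MulAut.conj g).toMonoidHom) :
    ∑ g, F g = Nat.card U • ∑ r ∈ R, F r := by
  rw [Finset.sum_congr rfl fun g _ => (hR.sum_ite_mem_eq F g).symm]
  rw [Finset.sum_comm, Finset.smul_sum]
  refine Finset.sum_congr rfl fun r _ => ?_
  by_cases hFr : F r = 0
  · rw [hFr, smul_zero]
    refine Finset.sum_eq_zero fun g _ => ?_
    split_ifs with hg
    · obtain ⟨l, hl, u, hu, rfl⟩ := hg
      rw [hF r l hl u hu, hFr]
    · rfl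
  have hcoset : ∀ g, (∃ l ∈ L, ∃ u ∈ U, g = l * r * u) ↔ r⁻¹ * g ∈ U := fun g =>
    ⟨fun ⟨l, hl, u, hu, hg⟩ => by
      rw [hg, show r⁻¹ * (l * r * u) = (r⁻¹ * l * r) * u by group]
      exact U.mul_mem (mem_map_conj_iff.1 (hF₀ r hFr hl)) hu,
    fun hg => ⟨1, L.one_mem, r⁻¹ * g, hg, by group⟩⟩
  have hcard : (Finset.univ.filter fun g => r⁻¹ * g ∈ U).card = Nat.card U := by
    rw [← Fintype.card_subtype, ← Nat.card_eq_fintype_card]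
    exact Nat.card_congr (Equiv.subtypeEquiv (Equiv.mulLeft r⁻¹) fun _ => Iff.rfl)
  calc _ = ∑ g, if r⁻¹ * g ∈ U then F r else 0 := by
        refine Finset.sum_congr rfl fun g _ => ?_
        simp_rw [hcoset]
        split_ifs with hg
        · rw [← hF r 1 L.one_mem _ hg]
          group
        · rfl
    _ = Nat.card U • F r := by
        rw [Finset.sum_ite, Finset.sum_const_zero, add_zero, Finset.sum_const, hcard]

end DoubleCosets

section Species

variable {A G 𝕂 : Type*} [CommGroup A] [Group G] [Field 𝕂]

noncomputable def speciesTerm (K : Subgroup G) (Ψ : (↥K →* A) →* 𝕂ˣ)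
    (p : Σ U : Subgroup G, (↥U →* A)) : 𝕂 :=
  if h : K ≤ p.1 then (Ψ (p.2.comp (Subgroup.inclusion h)) : 𝕂) else 0

def IsSpecies {B : Type*} [Ring B] [Algebra 𝕂 B] (ℬ : FiberedBurnsideData A G 𝕂 B)
    (s : ∀ K : Subgroup G, ((↥K →* A) →* 𝕂ˣ) → (B →ₗ[𝕂] 𝕂)) : Prop :=
  ∀ (K : Subgroup G) (Ψ : (↥K →* A) →* 𝕂ˣ) (p : Σ U : Subgroup G, (↥U →* A)) (R : Finset G),
    IsDCR K p.1 R → s K Ψ (ℬ.b p) = ∑ r ∈ R, speciesTerm K Ψ (r • p)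

theorem speciesTerm_smul_of_mem {K : Subgroup G} (Ψ : (↥K →* A) →* 𝕂ˣ)
    (q : Σ U : Subgroup G, (↥U →* A)) {k : G} (hk : k ∈ K) :
    speciesTerm K Ψ (k • q) = speciesTerm K Ψ q := by
  by_cases hKq : K ≤ q.1
  · rw [smul_eq_self_of_mem (hKq hk)]
  have hKkq : ¬ K ≤ (k • q).1 := fun h => hKq <| by
    rwa [← inv_smul_smul k q, smul_eq_self_of_mem (h (K.inv_mem hk))]
  rw [speciesTerm, speciesTerm, dif_neg hKq, dif_neg hKkq]

theorem card_mul_species_eq_sum [Fintype G] {B : Type*} [Ring B] [Algebra 𝕂 B]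
    {ℬ : FiberedBurnsideData A G 𝕂 B} {s : ∀ K : Subgroup G, ((↥K →* A) →* 𝕂ˣ) → (B →ₗ[𝕂] 𝕂)}
    (hs : IsSpecies ℬ s) (K : Subgroup G) (Ψ : (↥K →* A) →* 𝕂ˣ)
    (p : Σ U : Subgroup G, (↥U →* A)) :
    (Nat.card p.1 : 𝕂) * s K Ψ (ℬ.b p) = ∑ g : G, speciesTerm K Ψ (g • p) := by
  obtain ⟨R, hR⟩ := exists_isDCR K p.1
  rw [hs K Ψ p R hR, sum_eq_card_smul_sum_of_isDCR hR (fun g => speciesTerm K Ψ (g • p)),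
    nsmul_eq_mul]
  · intro g k hk u hu
    rw [mul_smul, mul_smul, smul_eq_self_of_mem hu, speciesTerm_smul_of_mem Ψ _ hk]
  · intro g hg
    by_contra hKg
    exact hg (dif_neg hKg)

theorem sum_inv_mul_speciesTerm {K : Subgroup G} [Finite (↥K →* A)]
    [HasEnoughRootsOfUnity 𝕂 (Monoid.exponent (↥K →* A))] [Fintype ((↥K →* A) →* 𝕂ˣ)]
    (φ₀ : ↥K →* A) (p : Σ U : Subgroup G, (↥U →* A)) :
    ∑ Ψ : (↥K →* A) →* 𝕂ˣ, (Ψ φ₀ : 𝕂)⁻¹ * speciesTerm K Ψ p =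
      if ∃ h : K ≤ p.1, p.2.comp (Subgroup.inclusion h) = φ₀ then
        (Fintype.card ((↥K →* A) →* 𝕂ˣ) : 𝕂) else 0 := by
  by_cases hK : K ≤ p.1
  · simp_rw [speciesTerm, dif_pos hK, ← Units.val_inv_eq_inv_val, ← Units.val_mul, ← map_inv,
      ← map_mul, sum_dual_apply_eq_ite, inv_mul_eq_one, eq_comm (a := φ₀), exists_prop_of_true hK]
  · simp [speciesTerm, hK]

end Species

section Injectivity

variable {A G 𝕂 B : Type*} [CommGroup A] [Group G] [Field 𝕂] [Ring B] [Algebra 𝕂 B]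
  {ℬ : FiberedBurnsideData A G 𝕂 B} {s : ∀ K : Subgroup G, ((↥K →* A) →* 𝕂ˣ) → (B →ₗ[𝕂] 𝕂)}

theorem exists_restrict_eq_iff_eq [Finite G] {p p₀ : Σ U : Subgroup G, (↥U →* A)}
    (hcard : Nat.card p.1 ≤ Nat.card p₀.1) :
    (∃ h : p₀.1 ≤ p.1, p.2.comp (Subgroup.inclusion h) = p₀.2) ↔ p = p₀ := by
  refine ⟨fun ⟨h, hres⟩ => ?_, ?_⟩
  · exact pair_ext (Subgroup.eq_of_le_of_card_ge h hcard).symm fun x _ hq =>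
      DFunLike.congr_fun hres ⟨x, hq⟩
  · rintro rfl
    exact ⟨le_rfl, rfl⟩

variable [Fintype G]

theorem card_mul_sum_dual_species_basis (hs : IsSpecies ℬ s) {p₀ q : Σ U : Subgroup G, (↥U →* A)}
    [Finite (↥p₀.1 →* A)] [HasEnoughRootsOfUnity 𝕂 (Monoid.exponent (↥p₀.1 →* A))]
    [Fintype ((↥p₀.1 →* A) →* 𝕂ˣ)] (hcard : Nat.card q.1 ≤ Nat.card p₀.1) :
    (Nat.card q.1 : 𝕂) * ∑ Ψ : (↥p₀.1 →* A) →* 𝕂ˣ, (Ψ p₀.2 : 𝕂)⁻¹ * s p₀.1 Ψ (ℬ.b q) =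
      Fintype.card ((↥p₀.1 →* A) →* 𝕂ˣ) * Nat.card {g : G // g • q = p₀} := by
  calc _ = ∑ Ψ : (↥p₀.1 →* A) →* 𝕂ˣ, (Ψ p₀.2 : 𝕂)⁻¹ * ∑ g : G, speciesTerm p₀.1 Ψ (g • q) := by
        rw [Finset.mul_sum]
        refine Finset.sum_congr rfl fun Ψ _ => ?_
        rw [← card_mul_species_eq_sum hs]
        ring
    _ = ∑ g : G, ∑ Ψ : (↥p₀.1 →* A) →* 𝕂ˣ, (Ψ p₀.2 : 𝕂)⁻¹ * speciesTerm p₀.1 Ψ (g • q) := by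
        simp_rw [Finset.mul_sum]
        exact Finset.sum_comm
    _ = ∑ g : G, if g • q = p₀ then (Fintype.card ((↥p₀.1 →* A) →* 𝕂ˣ) : 𝕂) else 0 := by
        refine Finset.sum_congr rfl fun g _ => ?_
        rw [sum_inv_mul_speciesTerm]
        simp only [exists_restrict_eq_iff_eq ((card_smul_fst g q).trans_le hcard)]
    _ = _ := by
        rw [Finset.sum_ite, Finset.sum_const_zero, add_zero, Finset.sum_const, nsmul_eq_mul,
          mul_comm, Nat.card_eq_fintype_card, Fintype.card_subtype]

variable [CharZero 𝕂] [∀ U : Subgroup G, Finite (↥U →* A)]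
  [∀ U : Subgroup G, HasEnoughRootsOfUnity 𝕂 (Monoid.exponent (↥U →* A))]

theorem sum_dual_species_basis_eq_ite (hs : IsSpecies ℬ s)
    {p₀ q : Σ U : Subgroup G, (↥U →* A)} [Fintype ((↥p₀.1 →* A) →* 𝕂ˣ)]
    (hcard : Nat.card q.1 ≤ Nat.card p₀.1) :
    ∑ Ψ : (↥p₀.1 →* A) →* 𝕂ˣ, (Ψ p₀.2 : 𝕂)⁻¹ * s p₀.1 Ψ (ℬ.b q) =
      if ∃ g : G, g • q = p₀ then
        (Fintype.card ((↥p₀.1 →* A) →* 𝕂ˣ) : 𝕂) * Nat.card {g : G // g • p₀ = p₀} / Nat.card p₀.1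
      else 0 := by
  have key := card_mul_sum_dual_species_basis hs hcard
  have hq₀ : (Nat.card q.1 : 𝕂) ≠ 0 := Nat.cast_ne_zero.2 Nat.card_pos.ne'
  split_ifs with horb
  · obtain ⟨g, hg⟩ := horb
    have hcq : Nat.card q.1 = Nat.card p₀.1 := by rw [← hg, card_smul_fst]
    rw [card_smul_eq_of_mem_orbit ⟨g⁻¹, by rw [← hg, inv_smul_smul]⟩ ⟨1, one_smul G p₀⟩,
      hcq] at key
    rw [eq_div_iff (hcq ▸ hq₀), mul_comm, key]
  · have : IsEmpty {g : G // g • q = p₀} := ⟨fun ⟨g, hg⟩ => horb ⟨g, hg⟩⟩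
    rw [Nat.card_of_isEmpty (α := {g : G // g • q = p₀}), Nat.cast_zero, mul_zero] at key
    exact (mul_eq_zero.1 key).resolve_left hq₀

theorem sum_coeff_orbit_eq_zero (hs : IsSpecies ℬ s) {T : Finset (Σ U : Subgroup G, (↥U →* A))}
    {c : (Σ U : Subgroup G, (↥U →* A)) → 𝕂}
    (hT : ∀ K Ψ, s K Ψ (∑ q ∈ T, c q • ℬ.b q) = 0) {p₀ : Σ U : Subgroup G, (↥U →* A)}
    (hmax : ∀ q ∈ T, Nat.card q.1 ≤ Nat.card p₀.1) :
    ∑ q ∈ T with ∃ g : G, g • q = p₀, c q = 0 := by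
  have := Fintype.ofFinite ((↥p₀.1 →* A) →* 𝕂ˣ)
  have : Nonempty {g : G // g • p₀ = p₀} := ⟨⟨1, one_smul G p₀⟩⟩
  set D : 𝕂 :=
    Fintype.card ((↥p₀.1 →* A) →* 𝕂ˣ) * Nat.card {g : G // g • p₀ = p₀} / Nat.card p₀.1
  have hD : D ≠ 0 := div_ne_zero (mul_ne_zero (Nat.cast_ne_zero.2 Fintype.card_ne_zero)
    (Nat.cast_ne_zero.2 Nat.card_pos.ne')) (Nat.cast_ne_zero.2 Nat.card_pos.ne')
  have hsum : D * ∑ q ∈ T with ∃ g : G, g • q = p₀, c q = 0 := by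
    calc _ = ∑ q ∈ T, c q * ∑ Ψ : (↥p₀.1 →* A) →* 𝕂ˣ, (Ψ p₀.2 : 𝕂)⁻¹ * s p₀.1 Ψ (ℬ.b q) := by
          rw [Finset.mul_sum, Finset.sum_filter]
          refine Finset.sum_congr rfl fun q hq => ?_
          rw [sum_dual_species_basis_eq_ite hs (hmax q hq)]
          split_ifs <;> ring
      _ = ∑ Ψ : (↥p₀.1 →* A) →* 𝕂ˣ, (Ψ p₀.2 : 𝕂)⁻¹ * s p₀.1 Ψ (∑ q ∈ T, c q • ℬ.b q) := by
          simp_rw [map_sum, map_smul, smul_eq_mul, Finset.mul_sum]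
          rw [Finset.sum_comm]
          exact Finset.sum_congr rfl fun _ _ => Finset.sum_congr rfl fun _ _ => by ring
      _ = 0 := by simp [hT]
  exact (mul_eq_zero.1 hsum).resolve_left hD

theorem sum_smul_basis_eq_zero (hs : IsSpecies ℬ s) (T : Finset (Σ U : Subgroup G, (↥U →* A)))
    (c : (Σ U : Subgroup G, (↥U →* A)) → 𝕂) (hT : ∀ K Ψ, s K Ψ (∑ q ∈ T, c q • ℬ.b q) = 0) :
    ∑ q ∈ T, c q • ℬ.b q = 0 := by
  induction T using Finset.strongInduction with
  | H T ih =>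
  rcases T.eq_empty_or_nonempty with rfl | hT₀
  · exact Finset.sum_empty
  obtain ⟨p₀, hp₀, hmax⟩ := T.exists_max_image (fun q => Nat.card q.1) hT₀
  have horbit : ∑ q ∈ T with ∃ g : G, g • q = p₀, c q • ℬ.b q = 0 := by
    have hb : ∀ q ∈ T.filter fun q => ∃ g : G, g • q = p₀, ℬ.b q = ℬ.b p₀ := fun q hq => by
      obtain ⟨g, rfl⟩ := (Finset.mem_filter.1 hq).2
      exact (ℬ.b_conj g q).symm
    rw [Finset.sum_congr rfl fun q hq => by rw [hb q hq], ← Finset.sum_smul,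
      sum_coeff_orbit_eq_zero hs hT hmax, zero_smul]
  rw [← Finset.sum_filter_add_sum_filter_not T (fun q => ∃ g : G, g • q = p₀), horbit,
    zero_add] at hT ⊢
  exact ih _ (Finset.filter_ssubset.2 ⟨p₀, hp₀, not_not.2 ⟨1, one_smul G p₀⟩⟩) hT

theorem eq_zero_of_forall_species_eq_zero (hs : IsSpecies ℬ s) {x : B}
    (hx : ∀ K Ψ, s K Ψ x = 0) : x = 0 := by
  have := Fintype.ofFinite (Σ U : Subgroup G, (↥U →* A))
  obtain ⟨c, rfl⟩ := (Submodule.mem_span_range_iff_exists_fun 𝕂).1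
    (ℬ.b_span ▸ Submodule.mem_top : x ∈ Submodule.span 𝕂 (Set.range ℬ.b))
  exact sum_smul_basis_eq_zero hs Finset.univ c hx

end Injectivity

section Moebius

variable {A G 𝕂 : Type*} [CommGroup A] [Group G] [Field 𝕂]

theorem map_conj_inv_eq_iff {L H : Subgroup G} {g : G} :
    L.map (MulAut.conj g⁻¹).toMonoidHom = H ↔ H.map (MulAut.conj g).toMonoidHom = L := by
  constructor <;> rintro rfl <;> rw [← map_conj_mul]
  · rw [mul_inv_cancel, map_conj_one]
  · rw [inv_mul_cancel, map_conj_one]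

theorem conjRes_eq_one {L K H : Subgroup G} {g : G} (hg : L ≤ H.map (MulAut.conj g).toMonoidHom)
    (hLK : L ≤ K.map (MulAut.conj g).toMonoidHom) {ψ : ↥H →* A}
    (hψ : ∀ x : ↥H, (x : G) ∈ K → ψ x = 1) : conjRes A L H g hg ψ = 1 :=
  MonoidHom.ext fun y => by
    rw [conjRes_apply_apply]
    exact hψ _ (mem_map_conj_iff.1 (hLK y.2))

theorem speciesTerm_smul_eq {L H : Subgroup G} (Ψ : (↥L →* A) →* 𝕂ˣ) (φ : ↥H →* A) {g : G}
    (hg : L ≤ H.map (MulAut.conj g).toMonoidHom) :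
    speciesTerm L Ψ (g • (⟨H, φ⟩ : Σ U : Subgroup G, (↥U →* A))) = Ψ (conjRes A L H g hg φ) :=
  dif_pos hg

theorem speciesTerm_smul_restrict {L K H : Subgroup G} (Ψ : (↥L →* A) →* 𝕂ˣ) (hKH : K ≤ H)
    (φ : ↥H →* A) (g : G) :
    speciesTerm L Ψ (g • (⟨K, φ.comp (Subgroup.inclusion hKH)⟩ : Σ U : Subgroup G, (↥U →* A))) =
      if L ≤ K.map (MulAut.conj g).toMonoidHom then
        speciesTerm L Ψ (g • (⟨H, φ⟩ : Σ U : Subgroup G, (↥U →* A))) else 0 := by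
  by_cases hLK : L ≤ K.map (MulAut.conj g).toMonoidHom
  · rw [if_pos hLK, speciesTerm_smul_eq _ _ (hLK.trans (Subgroup.map_mono hKH))]
    exact dif_pos hLK
  · rw [if_neg hLK]
    exact dif_neg hLK

variable [Fintype G] {H : Subgroup G} [Fintype (↥H →* A)]

theorem sum_speciesTerm_restrict (c : Subgroup G → 𝕂) (Φ : (↥H →* A) →* 𝕂ˣ) {L : Subgroup G}
    (Ψ : (↥L →* A) →* 𝕂ˣ) {g : G} (hg : L ≤ H.map (MulAut.conj g).toMonoidHom) (K : Subgroup G) :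
    ∑ φ : ↥H →* A,
      (if hK : K ≤ H ∧ (∀ ψ : ↥H →* A, (∀ x : ↥H, (x : G) ∈ K → ψ x = 1) → Φ ψ = 1) then
        c K * (Φ φ⁻¹ : 𝕂) *
          speciesTerm L Ψ (g • (⟨K, φ.comp (Subgroup.inclusion hK.1)⟩ :
            Σ U : Subgroup G, (↥U →* A)))
      else 0) =
      if (L.map (MulAut.conj g⁻¹).toMonoidHom ≤ K ∧ K ≤ H) ∧ Φ = Ψ.comp (conjRes A L H g hg) then
        c K * Fintype.card (↥H →* A) else 0 := by
  by_cases hK : (K ≤ H ∧ (∀ ψ : ↥H →* A, (∀ x : ↥H, (x : G) ∈ K → ψ x = 1) → Φ ψ = 1)) ∧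
      L ≤ K.map (MulAut.conj g).toMonoidHom
  · simp_rw [dif_pos hK.1, speciesTerm_smul_restrict, if_pos hK.2, speciesTerm_smul_eq _ _ hg,
      mul_assoc, ← Finset.mul_sum]
    change c K * ∑ φ, (Φ φ⁻¹ : 𝕂) * Ψ.comp (conjRes A L H g hg) φ = _
    rw [sum_apply_inv_mul_apply_eq_ite, mul_ite, mul_zero]
    simp only [map_conj_inv_le_iff.2 hK.2, hK.1.1, and_self, true_and]
  · rw [if_neg fun h => hK ⟨⟨h.1.2, fun ψ hψ => ?_⟩, map_conj_inv_le_iff.1 h.1.1⟩]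
    · refine Finset.sum_eq_zero fun φ _ => ?_
      by_cases hK' : K ≤ H ∧ (∀ ψ : ↥H →* A, (∀ x : ↥H, (x : G) ∈ K → ψ x = 1) → Φ ψ = 1)
      · rw [dif_pos hK', speciesTerm_smul_restrict, if_neg fun hLK => hK ⟨hK', hLK⟩, mul_zero]
      · exact dif_neg hK'
    · rw [h.2, MonoidHom.comp_apply, conjRes_eq_one hg (map_conj_inv_le_iff.1 h.1.1) hψ, map_one]

variable [Fintype (Subgroup G)]

def IsMoebius (μ : Subgroup G → Subgroup G → ℤ) : Prop :=
  ∀ K L : Subgroup G, K ≤ L →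
    (∑ M : Subgroup G, if K ≤ M ∧ M ≤ L then μ M L else 0) = if K = L then 1 else 0

theorem sum_moebius_speciesTerm {μ : Subgroup G → Subgroup G → ℤ} (hμ : IsMoebius μ)
    (Φ : (↥H →* A) →* 𝕂ˣ) (L : Subgroup G) (Ψ : (↥L →* A) →* 𝕂ˣ) (g : G) :
    ∑ K : Subgroup G, ∑ φ : ↥H →* A,
      (if hK : K ≤ H ∧ (∀ ψ : ↥H →* A, (∀ x : ↥H, (x : G) ∈ K → ψ x = 1) → Φ ψ = 1) then
        (μ K H : 𝕂) * (Φ φ⁻¹ : 𝕂) *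
          speciesTerm L Ψ (g • (⟨K, φ.comp (Subgroup.inclusion hK.1)⟩ :
            Σ U : Subgroup G, (↥U →* A)))
      else 0) =
      if charPairConj g (⟨H, Φ⟩ : Σ K : Subgroup G, ((↥K →* A) →* 𝕂ˣ)) = ⟨L, Ψ⟩ then
        (Fintype.card (↥H →* A) : 𝕂) else 0 := by
  by_cases hg : L ≤ H.map (MulAut.conj g).toMonoidHom
  swap
  · rw [if_neg fun h => hg (congrArg Sigma.fst h).ge]
    refine Finset.sum_eq_zero fun K _ => Finset.sum_eq_zero fun φ _ => ?_
    by_cases hK : K ≤ H ∧ (∀ ψ : ↥H →* A, (∀ x : ↥H, (x : G) ∈ K → ψ x = 1) → Φ ψ = 1)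
    · rw [dif_pos hK, speciesTerm_smul_restrict,
        if_neg fun hLK => hg (hLK.trans (Subgroup.map_mono hK.1)), mul_zero]
    · exact dif_neg hK
  have hμM : ∑ K : Subgroup G,
      (if L.map (MulAut.conj g⁻¹).toMonoidHom ≤ K ∧ K ≤ H then (μ K H : 𝕂) else 0) =
      if L.map (MulAut.conj g⁻¹).toMonoidHom = H then 1 else 0 := by
    simpa [apply_ite] using congrArg (Int.cast : ℤ → 𝕂) (hμ _ H (map_conj_inv_le_iff.2 hg))
  have hconj : charPairConj g (⟨H, Φ⟩ : Σ K : Subgroup G, ((↥K →* A) →* 𝕂ˣ)) = ⟨L, Ψ⟩ ↔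
      L.map (MulAut.conj g⁻¹).toMonoidHom = H ∧ Φ = Ψ.comp (conjRes A L H g hg) :=
    (charPairConj_eq_iff Φ Ψ hg).trans (and_congr_left' map_conj_inv_eq_iff.symm)
  simp only [sum_speciesTerm_restrict (fun K => (μ K H : 𝕂)) Φ Ψ hg, hconj]
  by_cases hΦ : Φ = Ψ.comp (conjRes A L H g hg)
  · simp_rw [hΦ, and_true, ← ite_zero_mul, ← Finset.sum_mul, hμM, ite_zero_mul, one_mul]
  · simp [hΦ]

end Moebius

section Idempotent

variable {A G 𝕂 B : Type*} [CommGroup A] [Group G] [Field 𝕂] [Ring B] [Algebra 𝕂 B]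
  [Fintype G] [Fintype (Subgroup G)] {H : Subgroup G} [Fintype (↥H →* A)]

noncomputable def idempotentSum (ℬ : FiberedBurnsideData A G 𝕂 B)
    (μ : Subgroup G → Subgroup G → ℤ) (Φ : (↥H →* A) →* 𝕂ˣ) : B :=
  ∑ K : Subgroup G, ∑ φ : ↥H →* A,
    if hK : K ≤ H ∧ (∀ ψ : ↥H →* A, (∀ x : ↥H, (x : G) ∈ K → ψ x = 1) → Φ ψ = 1) then
      (((Nat.card ↥K : 𝕂) * (μ K H : 𝕂) * ((Φ φ⁻¹ : 𝕂ˣ) : 𝕂)) •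
        ℬ.b ⟨K, φ.comp (Subgroup.inclusion hK.1)⟩)
    else 0

theorem species_idempotentSum {ℬ : FiberedBurnsideData A G 𝕂 B}
    {s : ∀ K : Subgroup G, ((↥K →* A) →* 𝕂ˣ) → (B →ₗ[𝕂] 𝕂)} (hs : IsSpecies ℬ s)
    {μ : Subgroup G → Subgroup G → ℤ} (hμ : IsMoebius μ)
    (Φ : (↥H →* A) →* 𝕂ˣ) (L : Subgroup G) (Ψ : (↥L →* A) →* 𝕂ˣ) :
    s L Ψ (idempotentSum ℬ μ Φ) = Nat.card (↥H →* A) * Nat.card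
      {g : G // charPairConj g (⟨H, Φ⟩ : Σ K : Subgroup G, ((↥K →* A) →* 𝕂ˣ)) = ⟨L, Ψ⟩} := by
  calc s L Ψ (idempotentSum ℬ μ Φ) = ∑ g : G, ∑ K : Subgroup G, ∑ φ : ↥H →* A, _ := ?_
    _ = ∑ g : G, _ := Finset.sum_congr rfl fun g _ => sum_moebius_speciesTerm hμ Φ L Ψ g
    _ = _ := by
      rw [Finset.sum_ite, Finset.sum_const_zero, add_zero, Finset.sum_const, nsmul_eq_mul,
        mul_comm, Nat.card_eq_fintype_card, Nat.card_eq_fintype_card, Fintype.card_subtype]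
  rw [idempotentSum, map_sum, Finset.sum_comm]
  refine Finset.sum_congr rfl fun K _ => ?_
  rw [map_sum, Finset.sum_comm]
  refine Finset.sum_congr rfl fun φ _ => ?_
  by_cases hK : K ≤ H ∧ (∀ ψ : ↥H →* A, (∀ x : ↥H, (x : G) ∈ K → ψ x = 1) → Φ ψ = 1)
  · simp only [dif_pos hK, map_smul, smul_eq_mul, ← Finset.mul_sum]
    rw [← card_mul_species_eq_sum hs]
    ring
  · simp only [dif_neg hK, map_zero, Finset.sum_const_zero]

end Idempotent

theorem stmt_14 {A G 𝕂 B : Type*} [CommGroup A] [Group G] [Fintype G]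
    [Fintype (Subgroup G)] [Field 𝕂] [CharZero 𝕂] [Ring B] [Algebra 𝕂 B]
    (hfin : ∀ K : Subgroup G, Finite (↥K →* A))
    (hsplit : ∀ K : Subgroup G, ∃ ζ : 𝕂, IsPrimitiveRoot ζ (Monoid.exponent (↥K →* A)))
    (ℬ : FiberedBurnsideData A G 𝕂 B)
    -- the species homomorphisms s^G_{(K,Ψ)} = s_Ψ ∘ π_K ∘ res^G_K
    (s : ∀ K : Subgroup G, ((↥K →* A) →* 𝕂ˣ) → (B →ₗ[𝕂] 𝕂))
    (hs : ∀ (K : Subgroup G) (Ψ : (↥K →* A) →* 𝕂ˣ) (p : Σ U : Subgroup G, (↥U →* A))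
      (R : Finset G), IsDCR K p.1 R →
      s K Ψ (ℬ.b p) = ∑ r ∈ R,
        (if h : K ≤ (pairConj r p).1 then
          ((Ψ ((pairConj r p).2.comp (Subgroup.inclusion h)) : 𝕂ˣ) : 𝕂) else 0))
    -- the Möbius function of the subgroup lattice of G
    (μ : Subgroup G → Subgroup G → ℤ)
    (hμ : ∀ K L : Subgroup G, K ≤ L →
      (∑ M : Subgroup G, if K ≤ M ∧ M ≤ L then μ M L else 0) = if K = L then 1 else 0)
    -- the pair (H,Φ) and its primitive idempotent e = e^G_{(H,Φ)}, characterized by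
    -- its species values: 1 on the conjugates of (H,Φ) and 0 elsewhere
    (H : Subgroup G) (Φ : (↥H →* A) →* 𝕂ˣ) [Fintype (↥H →* A)]
    (e : B)
    (he : ∀ (K : Subgroup G) (Ψ : (↥K →* A) →* 𝕂ˣ),
      s K Ψ e = if ∃ g : G, charPairConj g (⟨H, Φ⟩ : Σ K : Subgroup G, ((↥K →* A) →* 𝕂ˣ))
        = ⟨K, Ψ⟩ then 1 else 0) :
    e = ((Nat.card {g : G // charPairConj g (⟨H, Φ⟩ : Σ K : Subgroup G, ((↥K →* A) →* 𝕂ˣ))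
            = ⟨H, Φ⟩} : 𝕂) * (Nat.card (↥H →* A) : 𝕂))⁻¹ •
        ∑ K : Subgroup G, ∑ φ : ↥H →* A,
          if hK : K ≤ H ∧ (∀ ψ : ↥H →* A, (∀ x : ↥H, (x : G) ∈ K → ψ x = 1) → Φ ψ = 1) then
            (((Nat.card ↥K : 𝕂) * (μ K H : 𝕂) * ((Φ φ⁻¹ : 𝕂ˣ) : 𝕂)) •
              ℬ.b ⟨K, φ.comp (Subgroup.inclusion hK.1)⟩)
          else 0 := by
  have := hfin
  have (K : Subgroup G) : HasEnoughRootsOfUnity 𝕂 (Monoid.exponent (↥K →* A)) :=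
    ⟨hsplit K, inferInstance⟩
  change e = (_ : 𝕂) • idempotentSum ℬ μ Φ
  rw [← sub_eq_zero]
  refine eq_zero_of_forall_species_eq_zero hs fun L Ψ => ?_
  rw [map_sub, map_smul, smul_eq_mul, species_idempotentSum hs hμ Φ L Ψ, he L Ψ, sub_eq_zero]
  set x : Σ K : Subgroup G, ((↥K →* A) →* 𝕂ˣ) := ⟨H, Φ⟩
  split_ifs with horb
  · have hcard : Nat.card {g : G // charPairConj g x = ⟨L, Ψ⟩} =
        Nat.card {g : G // charPairConj g x = x} :=
      card_smul_eq_of_mem_orbit ⟨1, one_smul G x⟩ horb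
    have : Nonempty {g : G // charPairConj g x = x} := ⟨⟨1, one_smul G x⟩⟩
    have : Nonempty (↥H →* A) := ⟨1⟩
    rw [hcard, mul_comm (Nat.card (↥H →* A) : 𝕂), inv_mul_cancel₀]
    exact mul_ne_zero (Nat.cast_ne_zero.2 Nat.card_pos.ne') (Nat.cast_ne_zero.2 Nat.card_pos.ne')
  · have : IsEmpty {g : G // charPairConj g x = ⟨L, Ψ⟩} := ⟨fun ⟨g, hg⟩ => horb ⟨g, hg⟩⟩
    rw [Nat.card_of_isEmpty (α := {g : G // charPairConj g x = ⟨L, Ψ⟩}), Nat.cast_zero, mul_zero,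
      mul_zero]
end

section
/- With hypotheses as above, let N ≤ M be normal subgroups of a finite group G and Φ ∈ Hom(G*, 𝕂ˣ). Then m^M_{(G,Φ)} = m^N_{(G,Φ)} · m^{M/N}_{(G/N, Φ_N)}, i.e. the deflation constants are multiplicative along towers of normal subgroups. -/
open scoped Classical

/-- Pullback (e.g. inflation) of `A`-valued characters of the full group along a
homomorphism `f : G → G'`, written for the full subgroups `⊤`. -/
def charPull {G G' : Type*} [Group G] [Group G'] (A : Type*) [CommGroup A] (f : G →* G') :
    (↥(⊤ : Subgroup G') →* A) →* (↥(⊤ : Subgroup G) →* A) where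
  toFun χ := χ.comp ((f.comp (Subgroup.subtype ⊤)).codRestrict ⊤ fun _ => Subgroup.mem_top _)
  map_one' := MonoidHom.one_comp _
  map_mul' _ _ := MonoidHom.mul_comp _ _ _


section PushChar

variable {G Q A : Type*} [Group G] [Group Q] [CommGroup A]

lemma pushChar_congr (f : G →* Q) (H : Subgroup G) (φ : ↥H →* A)
    (h : ∀ u : ↥H, f u = 1 → φ u = 1) {u v : ↥H} (huv : f ↑u = f ↑v) : φ u = φ v := by
  have h1 : f ((u * v⁻¹ : ↥H) : G) = 1 := by
    push_cast
    rw [map_mul, map_inv, huv, mul_inv_cancel]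
  have h2 : φ (u * v⁻¹) = 1 := h _ h1
  rw [map_mul, map_inv, mul_inv_eq_one] at h2
  exact h2

lemma pushChar_exists_rep (f : G →* Q) (H : Subgroup G) (x : ↥(H.map f)) :
    ∃ u : ↥H, (x : Q) = f ↑u := by
  obtain ⟨u, hu, he⟩ := Subgroup.mem_map.mp x.2
  exact ⟨⟨u, hu⟩, he.symm⟩

noncomputable def pushCharAux (f : G →* Q) (H : Subgroup G) (φ : ↥H →* A) :
    ↥(H.map f) → A := fun x =>
  φ ⟨(Subgroup.mem_map.mp x.2).choose, (Subgroup.mem_map.mp x.2).choose_spec.1⟩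

lemma pushCharAux_spec (f : G →* Q) (H : Subgroup G) (φ : ↥H →* A)
    (h : ∀ u : ↥H, f u = 1 → φ u = 1) (u : ↥H) (hu : f ↑u ∈ H.map f) :
    pushCharAux f H φ ⟨f ↑u, hu⟩ = φ u :=
  pushChar_congr f H φ h (Subgroup.mem_map.mp hu).choose_spec.2

noncomputable def pushChar (f : G →* Q) (H : Subgroup G) (φ : ↥H →* A)
    (h : ∀ u : ↥H, f u = 1 → φ u = 1) : ↥(H.map f) →* A where
  toFun := pushCharAux f H φ
  map_one' := by
    have h1 : (1 : ↥(H.map f)) =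
        ⟨f ((1 : ↥H) : G), Subgroup.mem_map.mpr ⟨((1 : ↥H) : G), (1 : ↥H).2, rfl⟩⟩ := by
      apply Subtype.ext; simp
    rw [h1, pushCharAux_spec f H φ h, map_one]
  map_mul' x y := by
    obtain ⟨u, hu⟩ := pushChar_exists_rep f H x
    obtain ⟨v, hv⟩ := pushChar_exists_rep f H y
    have hu' : f ↑u ∈ H.map f := Subgroup.mem_map.mpr ⟨↑u, u.2, rfl⟩
    have hv' : f ↑v ∈ H.map f := Subgroup.mem_map.mpr ⟨↑v, v.2, rfl⟩
    have huv' : f ((u * v : ↥H) : G) ∈ H.map f :=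
      Subgroup.mem_map.mpr ⟨_, (u * v : ↥H).2, rfl⟩
    have hx : x = ⟨f ↑u, hu'⟩ := Subtype.ext hu
    have hy : y = ⟨f ↑v, hv'⟩ := Subtype.ext hv
    have hxy : x * y = ⟨f ((u * v : ↥H) : G), huv'⟩ := by
      apply Subtype.ext; push_cast; rw [map_mul, hu, hv]
    rw [hxy, hx, hy]
    show pushCharAux f H φ ⟨f ((u * v : ↥H) : G), huv'⟩ =
      pushCharAux f H φ ⟨f ↑u, hu'⟩ * pushCharAux f H φ ⟨f ↑v, hv'⟩
    rw [pushCharAux_spec f H φ h, pushCharAux_spec f H φ h,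
      pushCharAux_spec f H φ h, map_mul]

lemma pushChar_spec (f : G →* Q) (H : Subgroup G) (φ : ↥H →* A)
    (h : ∀ u : ↥H, f u = 1 → φ u = 1) (u : ↥H) (hu : f ↑u ∈ H.map f) :
    pushChar f H φ h ⟨f ↑u, hu⟩ = φ u :=
  pushCharAux_spec f H φ h u hu

end PushChar


theorem stmt_16 {A G 𝕂 B₁ B₂ B₃ : Type*} [CommGroup A] [Group G] [Fintype G]
    [Field 𝕂] [CharZero 𝕂]
    [Ring B₁] [Algebra 𝕂 B₁] [Ring B₂] [Algebra 𝕂 B₂] [Ring B₃] [Algebra 𝕂 B₃]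
    (hfinG : ∀ K : Subgroup G, Finite (↥K →* A))
    (hsplitG : ∀ K : Subgroup G, ∃ ζ : 𝕂, IsPrimitiveRoot ζ (Monoid.exponent (↥K →* A)))
    (N M : Subgroup G) [N.Normal] [M.Normal] (hNM : N ≤ M)
    [hM' : (M.map (QuotientGroup.mk' N)).Normal]
    -- the fibered Burnside algebras of G, G/N and (G/N)/(M/N)
    (ℬG : FiberedBurnsideData A G 𝕂 B₁)
    (ℬQ : FiberedBurnsideData A (G ⧸ N) 𝕂 B₂)
    (ℬQ2 : FiberedBurnsideData A ((G ⧸ N) ⧸ M.map (QuotientGroup.mk' N)) 𝕂 B₃)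
    -- the species homomorphisms of the three algebras
    (sG : ∀ K : Subgroup G, ((↥K →* A) →* 𝕂ˣ) → (B₁ →ₗ[𝕂] 𝕂))
    (hsG : ∀ (K : Subgroup G) (Ψ : (↥K →* A) →* 𝕂ˣ) (p : Σ U : Subgroup G, (↥U →* A))
      (R : Finset G), IsDCR K p.1 R →
      sG K Ψ (ℬG.b p) = ∑ r ∈ R,
        (if h : K ≤ (pairConj r p).1 then
          ((Ψ ((pairConj r p).2.comp (Subgroup.inclusion h)) : 𝕂ˣ) : 𝕂) else 0))
    (sQ : ∀ K : Subgroup (G ⧸ N), ((↥K →* A) →* 𝕂ˣ) → (B₂ →ₗ[𝕂] 𝕂))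
    (hsQ : ∀ (K : Subgroup (G ⧸ N)) (Ψ : (↥K →* A) →* 𝕂ˣ)
      (p : Σ U : Subgroup (G ⧸ N), (↥U →* A)) (R : Finset (G ⧸ N)), IsDCR K p.1 R →
      sQ K Ψ (ℬQ.b p) = ∑ r ∈ R,
        (if h : K ≤ (pairConj r p).1 then
          ((Ψ ((pairConj r p).2.comp (Subgroup.inclusion h)) : 𝕂ˣ) : 𝕂) else 0))
    (sQ2 : ∀ K : Subgroup ((G ⧸ N) ⧸ M.map (QuotientGroup.mk' N)),
      ((↥K →* A) →* 𝕂ˣ) → (B₃ →ₗ[𝕂] 𝕂))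
    (hsQ2 : ∀ (K : Subgroup ((G ⧸ N) ⧸ M.map (QuotientGroup.mk' N)))
      (Ψ : (↥K →* A) →* 𝕂ˣ)
      (p : Σ U : Subgroup ((G ⧸ N) ⧸ M.map (QuotientGroup.mk' N)), (↥U →* A))
      (R : Finset ((G ⧸ N) ⧸ M.map (QuotientGroup.mk' N))), IsDCR K p.1 R →
      sQ2 K Ψ (ℬQ2.b p) = ∑ r ∈ R,
        (if h : K ≤ (pairConj r p).1 then
          ((Ψ ((pairConj r p).2.comp (Subgroup.inclusion h)) : 𝕂ˣ) : 𝕂) else 0))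
    -- the three deflation maps
    (dN : B₁ →ₗ[𝕂] B₂)
    (hdN0 : ∀ p : Σ U : Subgroup G, (↥U →* A),
      (¬ ∀ u : ↥p.1, (u : G) ∈ N → p.2 u = 1) → dN (ℬG.b p) = 0)
    (hdN1 : ∀ p : Σ U : Subgroup G, (↥U →* A),
      (∀ u : ↥p.1, (u : G) ∈ N → p.2 u = 1) →
      ∀ q : Σ V : Subgroup (G ⧸ N), (↥V →* A),
        q.1 = p.1.map (QuotientGroup.mk' N) →
        (∀ (u : ↥p.1) (hu : QuotientGroup.mk' N u ∈ q.1), q.2 ⟨_, hu⟩ = p.2 u) →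
        dN (ℬG.b p) = ℬQ.b q)
    (dMN : B₂ →ₗ[𝕂] B₃)
    (hdMN0 : ∀ p : Σ U : Subgroup (G ⧸ N), (↥U →* A),
      (¬ ∀ u : ↥p.1, (u : G ⧸ N) ∈ M.map (QuotientGroup.mk' N) → p.2 u = 1) →
        dMN (ℬQ.b p) = 0)
    (hdMN1 : ∀ p : Σ U : Subgroup (G ⧸ N), (↥U →* A),
      (∀ u : ↥p.1, (u : G ⧸ N) ∈ M.map (QuotientGroup.mk' N) → p.2 u = 1) →
      ∀ q : Σ V : Subgroup ((G ⧸ N) ⧸ M.map (QuotientGroup.mk' N)), (↥V →* A),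
        q.1 = p.1.map (QuotientGroup.mk' (M.map (QuotientGroup.mk' N))) →
        (∀ (u : ↥p.1) (hu : QuotientGroup.mk' (M.map (QuotientGroup.mk' N)) u ∈ q.1),
          q.2 ⟨_, hu⟩ = p.2 u) →
        dMN (ℬQ.b p) = ℬQ2.b q)
    (dM : B₁ →ₗ[𝕂] B₃)
    (hdM0 : ∀ p : Σ U : Subgroup G, (↥U →* A),
      (¬ ∀ u : ↥p.1, (u : G) ∈ M → p.2 u = 1) → dM (ℬG.b p) = 0)
    (hdM1 : ∀ p : Σ U : Subgroup G, (↥U →* A),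
      (∀ u : ↥p.1, (u : G) ∈ M → p.2 u = 1) →
      ∀ q : Σ V : Subgroup ((G ⧸ N) ⧸ M.map (QuotientGroup.mk' N)), (↥V →* A),
        q.1 = p.1.map ((QuotientGroup.mk' (M.map (QuotientGroup.mk' N))).comp
          (QuotientGroup.mk' N)) →
        (∀ (u : ↥p.1)
          (hu : (QuotientGroup.mk' (M.map (QuotientGroup.mk' N))).comp
            (QuotientGroup.mk' N) u ∈ q.1), q.2 ⟨_, hu⟩ = p.2 u) →
        dM (ℬG.b p) = ℬQ2.b q)
    -- Φ and the three primitive idempotents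
    (Φ : (↥(⊤ : Subgroup G) →* A) →* 𝕂ˣ)
    (eG : B₁)
    (heG : ∀ (K : Subgroup G) (Ψ : (↥K →* A) →* 𝕂ˣ),
      sG K Ψ eG = if ∃ g : G, charPairConj g
        (⟨⊤, Φ⟩ : Σ K : Subgroup G, ((↥K →* A) →* 𝕂ˣ)) = ⟨K, Ψ⟩ then 1 else 0)
    (eQ : B₂)
    (heQ : ∀ (K : Subgroup (G ⧸ N)) (Ψ : (↥K →* A) →* 𝕂ˣ),
      sQ K Ψ eQ = if ∃ g : G ⧸ N, charPairConj g
        (⟨⊤, Φ.comp (charPull A (QuotientGroup.mk' N))⟩ :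
          Σ K : Subgroup (G ⧸ N), ((↥K →* A) →* 𝕂ˣ)) = ⟨K, Ψ⟩ then 1 else 0)
    (eQ2 : B₃)
    (heQ2 : ∀ (K : Subgroup ((G ⧸ N) ⧸ M.map (QuotientGroup.mk' N)))
      (Ψ : (↥K →* A) →* 𝕂ˣ),
      sQ2 K Ψ eQ2 = if ∃ g : (G ⧸ N) ⧸ M.map (QuotientGroup.mk' N), charPairConj g
        (⟨⊤, (Φ.comp (charPull A (QuotientGroup.mk' N))).comp
            (charPull A (QuotientGroup.mk' (M.map (QuotientGroup.mk' N))))⟩ :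
          Σ K : Subgroup ((G ⧸ N) ⧸ M.map (QuotientGroup.mk' N)),
            ((↥K →* A) →* 𝕂ˣ)) = ⟨K, Ψ⟩ then 1 else 0)
    -- the deflation constants
    (m₁ m₂ m₃ : 𝕂)
    (hm₁ : dN eG = m₁ • eQ) (hm₂ : dMN eQ = m₂ • eQ2) (hm₃ : dM eG = m₃ • eQ2) :
    m₃ = m₁ * m₂ := by
  classical
  set f₁ := QuotientGroup.mk' N with hf₁
  set Mq := M.map (QuotientGroup.mk' N) with hMqdef
  set f₂ := QuotientGroup.mk' Mq with hf₂
  have hkerN : ∀ x : G, x ∈ N ↔ f₁ x = 1 :=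
    fun x => (QuotientGroup.eq_one_iff x).symm
  have hkerM : ∀ y : G ⧸ N, y ∈ Mq ↔ f₂ y = 1 :=
    fun y => (QuotientGroup.eq_one_iff y).symm
  have key : ∀ p : Σ U : Subgroup G, (↥U →* A), dM (ℬG.b p) = dMN (dN (ℬG.b p)) := by
    intro p
    by_cases hN : ∀ u : ↥p.1, (u : G) ∈ N → p.2 u = 1
    · have hker : ∀ u : ↥p.1, f₁ ↑u = 1 → p.2 u = 1 := fun u hu => hN u ((hkerN _).mpr hu)
      set q₁ : Σ V : Subgroup (G ⧸ N), (↥V →* A) :=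
        ⟨p.1.map f₁, pushChar f₁ p.1 p.2 hker⟩ with hq₁def
      have hdn : dN (ℬG.b p) = ℬQ.b q₁ :=
        hdN1 p hN q₁ rfl (fun u hu => pushChar_spec f₁ p.1 p.2 hker u hu)
      by_cases hM : ∀ u : ↥p.1, (u : G) ∈ M → p.2 u = 1
      · have hq₁triv : ∀ u : ↥q₁.1, (u : G ⧸ N) ∈ Mq → q₁.2 u = 1 := by
          intro u hu
          obtain ⟨x, hx⟩ := pushChar_exists_rep f₁ p.1 u
          obtain ⟨m, hm, hmx⟩ := Subgroup.mem_map.mp hu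
          have hxm : (x : G) * m⁻¹ ∈ N := by
            apply (hkerN _).mpr
            rw [map_mul, map_inv, hmx, ← hx, mul_inv_cancel]
          have hxM : (x : G) ∈ M := by
            have h2 := mul_mem (hNM hxm) hm
            simpa using h2
          have hrw : u = ⟨f₁ ↑x, hx ▸ u.2⟩ := Subtype.ext hx
          rw [hrw]
          show pushChar f₁ p.1 p.2 hker _ = 1
          rw [pushChar_spec f₁ p.1 p.2 hker x _]
          exact hM x hxM
        have hker2 : ∀ u : ↥q₁.1, f₂ ↑u = 1 → q₁.2 u = 1 :=
          fun u hu => hq₁triv u ((hkerM _).mpr hu)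
        set q₂ : Σ V : Subgroup ((G ⧸ N) ⧸ Mq), (↥V →* A) :=
          ⟨q₁.1.map f₂, pushChar f₂ q₁.1 q₁.2 hker2⟩ with hq₂def
        have hd2 : dMN (ℬQ.b q₁) = ℬQ2.b q₂ :=
          hdMN1 q₁ hq₁triv q₂ rfl (fun u hu => pushChar_spec f₂ q₁.1 q₁.2 hker2 u hu)
        have hd3 : dM (ℬG.b p) = ℬQ2.b q₂ := by
          refine hdM1 p hM q₂ ?_ ?_
          · show (p.1.map f₁).map f₂ = p.1.map (f₂.comp f₁)
            rw [Subgroup.map_map]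
          · intro u hu
            have h1 : f₁ ↑u ∈ p.1.map f₁ := Subgroup.mem_map.mpr ⟨↑u, u.2, rfl⟩
            have h2 : f₂ ((⟨f₁ ↑u, h1⟩ : ↥q₁.1) : G ⧸ N) ∈ q₁.1.map f₂ :=
              Subgroup.mem_map.mpr ⟨_, h1, rfl⟩
            have hrw : (⟨(f₂.comp f₁) ↑u, hu⟩ : ↥q₂.1) =
                ⟨f₂ ((⟨f₁ ↑u, h1⟩ : ↥q₁.1) : G ⧸ N), h2⟩ := Subtype.ext rfl
            rw [hrw]
            show pushChar f₂ q₁.1 q₁.2 hker2 _ = _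
            rw [pushChar_spec f₂ q₁.1 q₁.2 hker2]
            show pushChar f₁ p.1 p.2 hker _ = _
            rw [pushChar_spec f₁ p.1 p.2 hker]
        rw [hd3, hdn, hd2]
      · have hbad : ¬ ∀ v : ↥q₁.1, (v : G ⧸ N) ∈ Mq → q₁.2 v = 1 := by
          intro hc
          apply hM
          intro u huM
          have hmem : f₁ ↑u ∈ p.1.map f₁ := Subgroup.mem_map.mpr ⟨↑u, u.2, rfl⟩
          have hmem2 : f₁ ↑u ∈ Mq := Subgroup.mem_map.mpr ⟨↑u, huM, rfl⟩
          have h3 := hc ⟨f₁ ↑u, hmem⟩ hmem2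
          rwa [show (⟨f₁ ↑u, hmem⟩ : ↥q₁.1) = ⟨f₁ ↑u, hmem⟩ from rfl,
            pushChar_spec f₁ p.1 p.2 hker] at h3
        rw [hdn, hdMN0 q₁ hbad, hdM0 p hM]
    · have hM : ¬ ∀ u : ↥p.1, (u : G) ∈ M → p.2 u = 1 :=
        fun hc => hN fun u hu => hc u (hNM hu)
      rw [hdM0 p hM, hdN0 p hN, map_zero]
  have hcomp : ∀ x : B₁, dM x = dMN (dN x) := by
    have hker : Set.range ℬG.b ⊆ ↑(LinearMap.ker (dM - dMN ∘ₗ dN)) := by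
      rintro _ ⟨p, rfl⟩
      simp only [SetLike.mem_coe, LinearMap.mem_ker, LinearMap.sub_apply,
        LinearMap.comp_apply, key p, sub_self]
    have hspan : Submodule.span 𝕂 (Set.range ℬG.b) ≤ LinearMap.ker (dM - dMN ∘ₗ dN) :=
      Submodule.span_le.mpr hker
    rw [ℬG.b_span] at hspan
    intro x
    have h4 := hspan (Submodule.mem_top (x := x))
    rw [LinearMap.mem_ker, LinearMap.sub_apply, LinearMap.comp_apply, sub_eq_zero] at h4
    exact h4
  have hEq : m₃ • eQ2 = (m₁ * m₂) • eQ2 := by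
    rw [← hm₃, hcomp eG, hm₁, map_smul, hm₂, smul_smul]
  have hne : eQ2 ≠ 0 := by
    intro h0
    set X : Σ K : Subgroup ((G ⧸ N) ⧸ Mq), ((↥K →* A) →* 𝕂ˣ) :=
      ⟨⊤, (Φ.comp (charPull A (QuotientGroup.mk' N))).comp
        (charPull A (QuotientGroup.mk' Mq))⟩ with hX
    have h1 := heQ2 (charPairConj (1 : (G ⧸ N) ⧸ Mq) X).1 (charPairConj 1 X).2
    rw [if_pos ⟨1, rfl⟩, h0, map_zero] at h1
    exact zero_ne_one h1
  have h5 : (m₃ - m₁ * m₂) • eQ2 = 0 := by rw [sub_smul, hEq, sub_self]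
  rcases smul_eq_zero.mp h5 with h | h
  · exact sub_eq_zero.mp h
  · exact absurd h hne
end

section
/- Let A ≤ 𝕂ˣ, 𝕂 of characteristic 0 with enough roots of unity, G and H finite groups with finite groups of A-valued characters, g ∈ G and h ∈ H. Then (H, ε_h) ≼ (G, ε_g) holds (i.e. there is N ⊴ G with (H,ε_h) ≅ (G/N, (ε_g)_N)) if and only if there exists a normal subgroup N of G and an isomorphism f : H → G/N with f(h) ∈ g·O(G)·N. -/
/-!
Put `y = ḡ⁻¹ f(h)` in `G/N`. The left-hand side says that `y ∈ O(G/N)`, the right-hand side that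
`y` lies in the image of `O(G)`, so it suffices that `O(G/N)` is the image of `O(G)`. One inclusion
is clear. For the other, `G/O(G)N` is abelian, and its exponent divides the order `n` of the
cyclic group of `A`-valued roots of unity of order dividing `|G|`, which contains all character
values and a primitive `n`-th root of unity. Hence `A`-characters of `G/O(G)N` separate points,
so every `z ∉ O(G)N` is detected by a character of `G/N`.
-/

section CharacterKernel

variable (G M : Type*) [Group G] [CommGroup M]

def characterKernel : Subgroup G := ⨅ φ : G →* M, φ.ker

variable {G M}

lemma mem_characterKernel {x : G} : x ∈ characterKernel G M ↔ ∀ φ : G →* M, φ x = 1 := by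
  simp [characterKernel, Subgroup.mem_iInf]

instance characterKernel_normal : (characterKernel G M).Normal :=
  Subgroup.normal_iInf_normal fun φ ↦ φ.normal_ker

lemma commutator_le_characterKernel : commutator G ≤ characterKernel G M :=
  le_iInf fun φ ↦ Abelianization.commutator_subset_ker φ

end CharacterKernel

theorem exists_monoidHom_apply_ne_one_of_notMem {G M : Type*} [Group G] [CommGroup M] [Finite G]
    {P : Subgroup G} [P.Normal] (hcomm : commutator G ≤ P) {n : ℕ} [NeZero n]
    [HasEnoughRootsOfUnity M n] (hpow : ∀ z : G, z ^ n ∈ P) {z : G} (hz : z ∉ P) :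
    ∃ φ : G →* M, P ≤ φ.ker ∧ φ z ≠ 1 := by
  have := Subgroup.Normal.quotient_commutative_iff_commutator_le.mpr hcomm
  let _ : CommGroup (G ⧸ P) := { mul_comm := mul_comm' }
  have hexp : Monoid.exponent (G ⧸ P) ∣ n := Monoid.exponent_dvd_of_forall_pow_eq_one fun b ↦ by
    induction b using QuotientGroup.induction_on with
    | H y => rw [← QuotientGroup.mk_pow, QuotientGroup.eq_one_iff]; exact hpow y
  have := HasEnoughRootsOfUnity.of_dvd M hexp
  obtain ⟨ψ, hψ⟩ := CommGroup.exists_apply_ne_one_of_hasEnoughRootsOfUnity (G ⧸ P) M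
    (a := (z : G ⧸ P)) (mt (QuotientGroup.eq_one_iff z).mp hz)
  refine ⟨(toUnits.symm.toMonoidHom.comp ψ).comp (QuotientGroup.mk' P), fun x hx ↦ ?_, ?_⟩
  · simp [(QuotientGroup.eq_one_iff x).mpr hx]
  · simpa using hψ

section RootsOfUnity

variable {R : Type*} [CommRing R] [IsDomain R]

lemma Subgroup.hasEnoughRootsOfUnity_of_isPrimitiveRoot (A : Subgroup Rˣ) {n : ℕ} [NeZero n]
    {ζ : A} (hζ : IsPrimitiveRoot ζ n) : HasEnoughRootsOfUnity A n where
  prim := ⟨ζ, hζ⟩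
  cyc := isCyclic_of_injective (restrictRootsOfUnity ((Units.coeHom R).comp A.subtype) n)
    fun a b hab ↦ by
      have := congrArg (fun u : rootsOfUnity n R ↦ ((u : Rˣ) : R)) hab
      simp only [restrictRootsOfUnity_coe_apply] at this
      exact Subtype.ext (Units.ext (Subtype.ext (Units.ext this)))

lemma exists_hasEnoughRootsOfUnity_forall_pow_mem_characterKernel (A : Subgroup Rˣ)
    (G : Type*) [Group G] [Finite G] :
    ∃ n, NeZero n ∧ HasEnoughRootsOfUnity A n ∧ ∀ z : G, z ^ n ∈ characterKernel G A := by
  have : NeZero (Nat.card G) := ⟨Nat.card_pos.ne'⟩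
  -- all character values lie in `C`, a finite, hence cyclic, subgroup of `Rˣ`
  set C : Subgroup Rˣ := A ⊓ rootsOfUnity (Nat.card G) R
  have : Finite C := Finite.of_injective _ (Subgroup.inclusion_injective inf_le_right)
  have : IsCyclic C := Subgroup.isCyclic_of_le inf_le_right
  obtain ⟨ζ, hζ⟩ := IsCyclic.exists_generator (α := C)
  have hprim : IsPrimitiveRoot ζ (Nat.card C) :=
    orderOf_eq_card_of_forall_mem_zpowers hζ ▸ IsPrimitiveRoot.orderOf ζ
  refine ⟨Nat.card C, ⟨Nat.card_pos.ne'⟩,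
    A.hasEnoughRootsOfUnity_of_isPrimitiveRoot
      (hprim.map_of_injective (Subgroup.inclusion_injective inf_le_left)),
    fun z ↦ mem_characterKernel.mpr fun φ ↦ ?_⟩
  have hφC : (φ z : Rˣ) ∈ C := by
    refine ⟨(φ z).2, (mem_rootsOfUnity _ _).mpr ?_⟩
    rw [← Subgroup.coe_pow, ← map_pow, pow_card_eq_one', map_one, OneMemClass.coe_one]
  have hpow : (φ z : Rˣ) ^ Nat.card C = 1 := by
    simpa only [Subgroup.coe_pow, OneMemClass.coe_one]
      using congrArg Subtype.val (pow_card_eq_one' (G := C) (x := ⟨_, hφC⟩))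
  exact Subtype.ext (by simpa using hpow)

lemma map_mk'_characterKernel (A : Subgroup Rˣ) {G : Type*} [Group G] [Finite G]
    (N : Subgroup G) [N.Normal] :
    (characterKernel G A).map (QuotientGroup.mk' N) = characterKernel (G ⧸ N) A := by
  refine le_antisymm (Subgroup.map_le_iff_le_comap.mpr fun x hx ↦ ?_) fun y hy ↦ ?_
  · exact mem_characterKernel.mpr fun ψ ↦ mem_characterKernel.mp hx (ψ.comp (QuotientGroup.mk' N))
  obtain ⟨z, rfl⟩ := QuotientGroup.mk_surjective y
  have hz : z ∈ characterKernel G A ⊔ N := by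
    obtain ⟨n, _, _, hpow⟩ := exists_hasEnoughRootsOfUnity_forall_pow_mem_characterKernel A G
    by_contra hz
    obtain ⟨φ, hφ, hφz⟩ := exists_monoidHom_apply_ne_one_of_notMem (M := A)
      (commutator_le_characterKernel.trans le_sup_left)
      (fun z ↦ Subgroup.mem_sup_left (hpow z)) hz
    exact hφz (mem_characterKernel.mp hy (QuotientGroup.lift N φ (le_sup_right.trans hφ)))
  obtain ⟨x, hx, m, hm, rfl⟩ := Subgroup.mem_sup_of_normal_right.mp hz
  exact ⟨x, hx, by simpa [QuotientGroup.eq_one_iff] using hm⟩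

end RootsOfUnity

theorem stmt_18_general {𝕂 : Type*} [Field 𝕂] (A : Subgroup 𝕂ˣ)
    (G H : Type*) [Group G] [Finite G] [Group H]
    (g : G) (h : H) :
    (∃ N : Subgroup G, ∃ _ : N.Normal, ∃ f : H ≃* (G ⧸ N),
        ∀ φ : (G ⧸ N) →* ↥A, φ (f h) = φ ((QuotientGroup.mk g : G ⧸ N))) ↔
      (∃ N : Subgroup G, ∃ _ : N.Normal, ∃ f : H ≃* (G ⧸ N),
        ∃ x ∈ ⨅ φ : G →* ↥A, φ.ker,
          f h = (QuotientGroup.mk (g * x) : G ⧸ N)) := by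
  refine exists_congr fun N ↦ exists_congr fun _ ↦ exists_congr fun f ↦ ?_
  have hcharacters : (∀ φ : (G ⧸ N) →* ↥A, φ (f h) = φ (g : G ⧸ N)) ↔
      (g : G ⧸ N)⁻¹ * f h ∈ characterKernel (G ⧸ N) A := by
    simp only [mem_characterKernel, map_mul, map_inv, inv_mul_eq_one]
    exact forall_congr' fun _ ↦ eq_comm
  rw [hcharacters, ← map_mk'_characterKernel]
  simp [characterKernel, QuotientGroup.mk_mul, eq_inv_mul_iff_mul_eq, eq_comm]

theorem stmt_18 {𝕂 : Type*} [Field 𝕂] [CharZero 𝕂] (A : Subgroup 𝕂ˣ)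
    (G H : Type*) [Group G] [Finite G] [Group H] [Finite H]
    [Finite (G →* ↥A)] [Finite (H →* ↥A)]
    (g : G) (h : H) :
    (∃ N : Subgroup G, ∃ _ : N.Normal, ∃ f : H ≃* (G ⧸ N),
        ∀ φ : (G ⧸ N) →* ↥A, φ (f h) = φ ((QuotientGroup.mk g : G ⧸ N))) ↔
      (∃ N : Subgroup G, ∃ _ : N.Normal, ∃ f : H ≃* (G ⧸ N),
        ∃ x ∈ ⨅ φ : G →* ↥A, φ.ker,
          f h = (QuotientGroup.mk (g * x) : G ⧸ N)) :=
  stmt_18_general A G H g h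
end
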